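/- arXiv:1011.1237 — 8 statements merged into one kernel-verified Lean document; each statement's English description precedes it below -/
import Mathlib

section
/- Suppose the system is operated under the MaxWeight policy with weight matrix D and the load vector satisfies ρ ∉ 𝒫 (overload). Then limsup_{t→∞} ⟨X(t)/t, D·(X(t)/t)⟩ > 0; in particular there exists a queue q with limsup_{t→∞} X_q(t)/t > 0, and any subsequential limit η of X(t)/t along a sequence attaining this limsup is nonzero. -/
/-!
Overload forces linear growth of the backlog. Summing the recursion gives the Lindley bound
`∑_{s<t} A(s) - ∑_{s<t} S(σ s) ≤ X(t)`, and `∑_{s<t} S(σ s) / t` is the convex combination of the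
service vectors weighted by the empirical frequencies of the schedule. These frequencies live in
the compact standard simplex, so if `X(t)/t → 0`, passing to a subsequence along which they
converge to some `α` yields `ρ ≤ ∑ αᵢ Sᵢ`, i.e. `ρ ∈ 𝒫`. So in overload `X(t)/t` does not tend
to `0`. As `0 ≤ X(t)/t ≤ Ā`, this gives a positive limsup both for some coordinate and for the
positive definite form `⟨X/t, D X/t⟩`, and a subsequence along which `X(t)/t → 0` drives that
form to `0`, so it cannot attain the limsup.
-/

open Finset Filter Topology

/-- The stability region: loads dominated by a convex combination of service vectors. -/
def stabRegion {Q N : ℕ} (S : Fin N → Fin Q → ℝ) : Set (Fin Q → ℝ) :=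
  {r | (∀ q, 0 ≤ r q) ∧ ∃ α : Fin N → ℝ, (∀ i, 0 ≤ α i) ∧ (∑ i, α i) = 1 ∧
    ∀ q, r q ≤ ∑ i, α i * S i q}

lemma limsup_pos_of_not_tendsto_zero {α : Type*} {l : Filter α} {f : α → ℝ} (h0 : ∀ a, 0 ≤ f a)
    (hbdd : IsBoundedUnder (· ≤ ·) l f) (hf : ¬ Tendsto f l (𝓝 0)) : 0 < limsup f l := by
  contrapose! hf
  exact tendsto_order.2 ⟨fun _ ha => .of_forall fun a => ha.trans_le (h0 a),
    fun _ ha => eventually_lt_of_limsup_lt (hf.trans_lt ha) hbdd⟩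

lemma tendsto_sum_mul_mul_self_zero_iff {ι α : Type*} [Fintype ι] {d : ι → ℝ}
    (hd : ∀ i, 0 < d i) {l : Filter α} {x : α → ι → ℝ} :
    Tendsto (fun a => ∑ i, x a i * (d i * x a i)) l (𝓝 0) ↔ Tendsto x l (𝓝 0) := by
  have hnn : ∀ a j, 0 ≤ x a j * (d j * x a j) := fun a j => by
    rw [mul_left_comm]; exact mul_nonneg (hd j).le (mul_self_nonneg _)
  constructor
  · intro h
    refine tendsto_pi_nhds.2 fun i => ?_
    have hterm : Tendsto (fun a => x a i * (d i * x a i)) l (𝓝 0) :=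
      squeeze_zero (hnn · i) (fun a => single_le_sum (fun j _ => hnn a j) (mem_univ i)) h
    have hsq : Tendsto (fun a => x a i * x a i) l (𝓝 0) := by
      have := hterm.const_mul (d i)⁻¹
      rw [mul_zero] at this
      refine this.congr fun a => ?_
      field_simp [(hd i).ne']
    have habs : Tendsto (fun a => |x a i|) l (𝓝 0) := by
      simpa [Real.sqrt_mul_self_eq_abs] using hsq.sqrt
    exact (tendsto_zero_iff_abs_tendsto_zero _).2 habs
  · intro h
    have hcont : Continuous fun y : ι → ℝ => ∑ i, y i * (d i * y i) := by fun_prop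
    simpa [Function.comp_def] using (hcont.tendsto 0).comp h

section Queue

variable {a c x : ℕ → ℝ}

lemma queue_nonneg (hx0 : x 0 = 0) (ha : ∀ t, 0 ≤ a t)
    (hrec : ∀ t, x (t + 1) = x t + a t - min (c t) (x t)) (t : ℕ) : 0 ≤ x t := by
  induction t with
  | zero => exact hx0.ge
  | succ t _ => rw [hrec]; linarith [ha t, min_le_right (c t) (x t)]

lemma queue_le_mul {abar : ℝ} (hx0 : x 0 = 0) (ha : ∀ t, 0 ≤ a t) (habar : ∀ t, a t ≤ abar)
    (hc : ∀ t, 0 ≤ c t) (hrec : ∀ t, x (t + 1) = x t + a t - min (c t) (x t)) (t : ℕ) :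
    x t ≤ t * abar := by
  induction t with
  | zero => simp [hx0]
  | succ t ih =>
    rw [hrec]
    have := le_min (hc t) (queue_nonneg hx0 ha hrec t)
    push_cast
    linarith [habar t]

lemma sum_sub_sum_le_queue (hx0 : x 0 = 0)
    (hrec : ∀ t, x (t + 1) = x t + a t - min (c t) (x t)) (t : ℕ) :
    ∑ s ∈ range t, a s - ∑ s ∈ range t, c s ≤ x t := by
  induction t with
  | zero => simp [hx0]
  | succ t ih =>
    rw [sum_range_succ, sum_range_succ, hrec]
    linarith [min_le_left (c t) (x t)]

end Queue

section EmpiricalFreq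

variable {ι : Type*} [Fintype ι] [DecidableEq ι]

noncomputable def empiricalFreq (σ : ℕ → ι) (t : ℕ) (i : ι) : ℝ :=
  (#{s ∈ range t | σ s = i} : ℝ) / t

lemma empiricalFreq_mem_stdSimplex (σ : ℕ → ι) {t : ℕ} (ht : 0 < t) :
    empiricalFreq σ t ∈ stdSimplex ℝ ι := by
  refine ⟨fun i => by unfold empiricalFreq; positivity, ?_⟩
  simp only [empiricalFreq, ← sum_div]
  rw [← Nat.cast_sum, ← card_eq_sum_card_fiberwise (fun _ _ => mem_univ _), card_range,
    div_self (Nat.cast_pos.2 ht).ne']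

lemma sum_range_comp_div_eq (σ : ℕ → ι) (u : ι → ℝ) (t : ℕ) :
    (∑ s ∈ range t, u (σ s)) / t = ∑ i, empiricalFreq σ t i * u i := by
  rw [← sum_fiberwise' (range t) σ u, sum_div]
  refine sum_congr rfl fun i _ => ?_
  simp [empiricalFreq, div_mul_eq_mul_div]

end EmpiricalFreq

lemma mem_stabRegion_of_tendsto_div_zero {Q N : ℕ} {A : ℕ → Fin Q → ℝ} {ρ : Fin Q → ℝ}
    (hA0 : ∀ t q, 0 ≤ A t q)
    (hρ : ∀ q, Tendsto (fun t : ℕ => (∑ s ∈ range t, A s q) / (t : ℝ)) atTop (𝓝 (ρ q)))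
    {S : Fin N → Fin Q → ℝ} {σ : ℕ → Fin N} {X : ℕ → Fin Q → ℝ}
    (hbacklog : ∀ t q, ∑ s ∈ range t, A s q - ∑ s ∈ range t, S (σ s) q ≤ X t q)
    (hX : Tendsto (fun t q => X t q / (t : ℝ)) atTop (𝓝 0)) :
    ρ ∈ stabRegion S := by
  obtain ⟨α, hα, φ, hφ, hfreq⟩ := (isCompact_stdSimplex ℝ (Fin N)).tendsto_subseq
    fun t => empiricalFreq_mem_stdSimplex σ t.succ_pos
  have hψ : Tendsto (fun c => φ c + 1) atTop atTop :=
    (tendsto_add_atTop_nat 1).comp hφ.tendsto_atTop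
  refine ⟨fun q => ge_of_tendsto' (hρ q) fun t =>
    div_nonneg (sum_nonneg fun s _ => hA0 s q) t.cast_nonneg, α, hα.1, hα.2, fun q => ?_⟩
  have hrhs := ((tendsto_pi_nhds.1 hX q).comp hψ).add <|
    tendsto_finsetSum univ fun i _ => (tendsto_pi_nhds.1 hfreq i).mul_const (S i q)
  rw [Pi.zero_apply, zero_add] at hrhs
  refine le_of_tendsto_of_tendsto' ((hρ q).comp hψ) hrhs fun c => ?_
  simp only [Function.comp_apply, Nat.succ_eq_add_one]
  rw [← sum_range_comp_div_eq σ (S · q), ← add_div]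
  gcongr
  linarith [hbacklog (φ c + 1) q]

theorem stmt0_general {Q N : ℕ}
    (A : ℕ → Fin Q → ℝ) (Abar : Fin Q → ℝ)
    (hA0 : ∀ t q, 0 ≤ A t q) (hAbar : ∀ t q, A t q ≤ Abar q)
    (ρ : Fin Q → ℝ)
    (hρ : ∀ q, Tendsto (fun t : ℕ => (∑ s ∈ Finset.range t, A s q) / (t : ℝ))
      atTop (𝓝 (ρ q)))
    (S : Fin N → Fin Q → ℝ) (hS : ∀ i q, 0 ≤ S i q)
    (σ : ℕ → Fin N)
    (d : Fin Q → ℝ) (hd : ∀ q, 0 < d q)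
    (X : ℕ → Fin Q → ℝ) (hX0 : ∀ q, X 0 q = 0)
    (hXrec : ∀ t q, X (t + 1) q = X t q + A t q - min (S (σ t) q) (X t q))
    (hover : ρ ∉ stabRegion S) :
    0 < limsup (fun t : ℕ => ∑ q, (X t q / (t : ℝ)) * (d q * (X t q / (t : ℝ)))) atTop ∧
    (∃ q, 0 < limsup (fun t : ℕ => X t q / (t : ℝ)) atTop) ∧
    ∀ (tc : ℕ → ℕ) (η : Fin Q → ℝ), StrictMono tc →
      Tendsto (fun c => fun q => X (tc c) q / (tc c : ℝ)) atTop (𝓝 η) →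
      Tendsto (fun c => ∑ q, (X (tc c) q / (tc c : ℝ)) * (d q * (X (tc c) q / (tc c : ℝ))))
        atTop
        (𝓝 (limsup (fun t : ℕ => ∑ q, (X t q / (t : ℝ)) * (d q * (X t q / (t : ℝ)))) atTop)) →
      η ≠ 0 := by
  have hnn t q : 0 ≤ X t q / t :=
    div_nonneg (queue_nonneg (x := (X · q)) (hX0 q) (hA0 · q) (hXrec · q) t) t.cast_nonneg
  have hle t q : X t q / t ≤ Abar q :=
    div_le_of_le_mul₀ t.cast_nonneg ((hA0 0 q).trans (hAbar 0 q)) <|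
      (queue_le_mul (x := (X · q)) (hX0 q) (hA0 · q) (hAbar · q) (fun s => hS (σ s) q)
        (hXrec · q) t).trans_eq (mul_comm _ _)
  have hunstable : ¬ Tendsto (fun t q => X t q / (t : ℝ)) atTop (𝓝 0) := fun h =>
    hover <| mem_stabRegion_of_tendsto_div_zero hA0 hρ
      (fun t q => sum_sub_sum_le_queue (x := (X · q)) (hX0 q) (hXrec · q) t) h
  have hpos : 0 < limsup (fun t : ℕ => ∑ q, (X t q / (t : ℝ)) * (d q * (X t q / (t : ℝ))))
      atTop := by
    refine limsup_pos_of_not_tendsto_zero (fun t => ?_)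
      (isBoundedUnder_of ⟨∑ q, Abar q * (d q * Abar q), fun t => ?_⟩)
      (mt (tendsto_sum_mul_mul_self_zero_iff hd).1 hunstable)
    · exact sum_nonneg fun q _ => mul_nonneg (hnn t q) (mul_nonneg (hd q).le (hnn t q))
    · exact sum_le_sum fun q _ => mul_le_mul (hle t q)
        (mul_le_mul_of_nonneg_left (hle t q) (hd q).le) (mul_nonneg (hd q).le (hnn t q))
        ((hnn t q).trans (hle t q))
  refine ⟨hpos, ?_, ?_⟩
  · obtain ⟨q, hq⟩ := not_forall.1 (mt tendsto_pi_nhds.2 hunstable)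
    exact ⟨q, limsup_pos_of_not_tendsto_zero (hnn · q) (isBoundedUnder_of ⟨_, (hle · q)⟩) hq⟩
  · rintro tc η - hη hlim rfl
    exact hpos.ne' <| tendsto_nhds_unique hlim <| (tendsto_sum_mul_mul_self_zero_iff hd).2 hη

/-- under MaxWeight in overload, the quadratic limsup is positive, some queue's
scaled backlog has positive limsup, and any subsequential limit attaining the limsup is nonzero. -/
theorem stmt0 {Q N : ℕ} (hQ : 0 < Q) (hN : 0 < N)
    (A : ℕ → Fin Q → ℝ) (Abar : Fin Q → ℝ)
    (hA0 : ∀ t q, 0 ≤ A t q) (hAbar : ∀ t q, A t q ≤ Abar q)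
    (ρ : Fin Q → ℝ) (hρpos : ∀ q, 0 < ρ q)
    (hρ : ∀ q, Tendsto (fun t : ℕ => (∑ s ∈ Finset.range t, A s q) / (t : ℝ))
      atTop (𝓝 (ρ q)))
    (S : Fin N → Fin Q → ℝ) (hS : ∀ i q, 0 ≤ S i q)
    (σ : ℕ → Fin N)
    (d : Fin Q → ℝ) (hd : ∀ q, 0 < d q)
    (X : ℕ → Fin Q → ℝ) (hX0 : ∀ q, X 0 q = 0)
    (hXrec : ∀ t q, X (t + 1) q = X t q + A t q - min (S (σ t) q) (X t q))
    (hMW : ∀ t j, ∑ q, S j q * (d q * X t q) ≤ ∑ q, S (σ t) q * (d q * X t q))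
    (hover : ρ ∉ stabRegion S) :
    0 < limsup (fun t : ℕ => ∑ q, (X t q / (t : ℝ)) * (d q * (X t q / (t : ℝ)))) atTop ∧
    (∃ q, 0 < limsup (fun t : ℕ => X t q / (t : ℝ)) atTop) ∧
    ∀ (tc : ℕ → ℕ) (η : Fin Q → ℝ), StrictMono tc →
      Tendsto (fun c => fun q => X (tc c) q / (tc c : ℝ)) atTop (𝓝 η) →
      Tendsto (fun c => ∑ q, (X (tc c) q / (tc c : ℝ)) * (d q * (X (tc c) q / (tc c : ℝ))))
        atTop
        (𝓝 (limsup (fun t : ℕ => ∑ q, (X t q / (t : ℝ)) * (d q * (X t q / (t : ℝ)))) atTop)) →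
      η ≠ 0 :=
  stmt0_general A Abar hA0 hAbar ρ hρ S hS σ d hd X hX0 hXrec hover
end

section
/- Suppose the system is operated under the MaxWeight policy with weight matrix D and ρ ∉ 𝒫. Then the limit η := lim_{t→∞} X(t)/t exists and is nonzero, and η is the unique minimizer of x ↦ ⟨x, D·x⟩ over the set Ψ(ρ,𝒮); in particular η depends only on ρ, 𝒮 and D and not on the particular arrival trace. Equivalently, η is the unique vector of the form η = (ρ − Σ_{m=1}^N α_m S_m)⁺ with α_m ≥ 0, Σ_{m=1}^N α_m = 1, such that ⟨η, D·S_m⟩ ≥ ⟨η, D·S_k⟩ for every k whenever α_m > 0. -/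
open Finset Filter Topology

/-- The set Ψ(ρ,𝒮) = {(ρ − Σ α_m S_m)⁺ : α ≥ 0, Σ α ≤ 1}. -/
def Psi {Q N : ℕ} (ρ : Fin Q → ℝ) (S : Fin N → Fin Q → ℝ) : Set (Fin Q → ℝ) :=
  {x | ∃ α : Fin N → ℝ, (∀ m, 0 ≤ α m) ∧ (∑ m, α m) ≤ 1 ∧
    x = fun q => max (ρ q - ∑ m, α m * S m q) 0}

/-!
Let `α` minimise `β ↦ ‖(ρ - β S)⁺‖²_D` over the simplex and put `η = (ρ - α S)⁺`. Moving a little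
mass between two schedules shows that `α` only charges schedules maximising `⟨S m, D η⟩`; this
turns into the variational inequality `⟨η, D η⟩ ≤ ⟨x, D η⟩` on `Ψ`, so `η` is the strict minimiser
of the quadratic form on `Ψ` and the only fixed point. If `η = 0` then `ρ ≤ α S`, i.e. `ρ ∈ 𝒫`.

For the fluid limit take `V t = ‖X t - t η‖²_D`. MaxWeight serves at least as much `D X`-weighted
work as the static mix `α S`, and `α` charges only maximisers of `⟨S m, D η⟩`, so
`V (t + 1) - V t ≤ 2 ⟨X t - t η, D (A t - ρ)⟩ + C`. Since `X t - t η` has bounded increments,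
summation by parts and Cesàro turn the vanishing arrival averages into `V t = o(t²)`, i.e.
`X t / t → η`.
-/

open Matrix

-- Service vectors are the rows of `S`, so `β ᵥ* S = ∑ m, β m • S m`; `x ⬝ᵥ (d * y)` is `⟨x, D y⟩`.

section Simplex

variable {κ : Type*} [Fintype κ]

def SupportedOnMaximizers (α w : κ → ℝ) : Prop :=
  ∀ m, 0 < α m → ∀ k, w k ≤ w m

lemma SupportedOnMaximizers.le_dotProduct {α w : κ → ℝ} (h : SupportedOnMaximizers α w)
    (hα : α ∈ stdSimplex ℝ κ) (k : κ) : w k ≤ α ⬝ᵥ w :=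
  calc w k = α ⬝ᵥ fun _ => w k := by simp only [dotProduct, ← sum_mul, hα.2, one_mul]
    _ ≤ α ⬝ᵥ w := sum_le_sum fun m _ => by
      rcases (hα.1 m).eq_or_lt with h0 | hpos
      · simp [← h0]
      · exact mul_le_mul_of_nonneg_left (h m hpos k) hpos.le

lemma dotProduct_le_of_forall_le {β w : κ → ℝ} {M : ℝ} (hβ0 : 0 ≤ β) (hβ1 : ∑ m, β m ≤ 1)
    (hw : ∀ k, w k ≤ M) (hM : 0 ≤ M) : β ⬝ᵥ w ≤ M :=
  calc β ⬝ᵥ w ≤ (∑ m, β m) * M := by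
        rw [sum_mul]; exact sum_le_sum fun m _ => mul_le_mul_of_nonneg_left (hw m) (hβ0 m)
    _ ≤ M := mul_le_of_le_one_left hM hβ1

end Simplex

section WeightedInner

variable {ι : Type*} [Fintype ι] {d : ι → ℝ}

lemma dotProduct_mul_comm (d x y : ι → ℝ) : x ⬝ᵥ (d * y) = y ⬝ᵥ (d * x) :=
  sum_congr rfl fun _ _ => by simp only [Pi.mul_apply]; ring

lemma add_dotProduct_mul_add (d x y : ι → ℝ) :
    (x + y) ⬝ᵥ (d * (x + y)) = x ⬝ᵥ (d * x) + 2 * (x ⬝ᵥ (d * y)) + y ⬝ᵥ (d * y) := by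
  rw [mul_add, add_dotProduct, dotProduct_add, dotProduct_add, dotProduct_mul_comm d y x]; ring

lemma sub_dotProduct_mul_sub (d x y : ι → ℝ) :
    (x - y) ⬝ᵥ (d * (x - y)) = x ⬝ᵥ (d * x) - 2 * (x ⬝ᵥ (d * y)) + y ⬝ᵥ (d * y) := by
  rw [mul_sub, sub_dotProduct, dotProduct_sub, dotProduct_sub, dotProduct_mul_comm d y x]; ring

lemma dotProduct_mul_self_nonneg (hd : 0 ≤ d) (x : ι → ℝ) : 0 ≤ x ⬝ᵥ (d * x) :=
  sum_nonneg fun q _ => by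
    rw [Pi.mul_apply, mul_left_comm]
    exact mul_nonneg (hd q) (mul_self_nonneg _)

lemma dotProduct_mul_self_pos (hd : ∀ q, 0 < d q) {x : ι → ℝ} (hx : x ≠ 0) :
    0 < x ⬝ᵥ (d * x) := by
  obtain ⟨q, hq⟩ := Function.ne_iff.1 hx
  exact sum_pos' (fun r _ => by simp only [Pi.mul_apply]; nlinarith [hd r, mul_self_nonneg (x r)])
    ⟨q, mem_univ q, by simp only [Pi.mul_apply]; nlinarith [hd q, mul_self_pos.2 hq]⟩

lemma dotProduct_mul_self_le (hd : 0 ≤ d) {x K : ι → ℝ} (h : ∀ q, |x q| ≤ K q) :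
    x ⬝ᵥ (d * x) ≤ K ⬝ᵥ (d * K) :=
  sum_le_sum fun q _ => by
    have := mul_self_le_mul_self (abs_nonneg _) (h q)
    rw [abs_mul_abs_self] at this
    simp only [Pi.mul_apply]
    nlinarith [mul_le_mul_of_nonneg_left this (hd q)]

lemma dotProduct_mul_self_lt_of_dotProduct_le (hd : ∀ q, 0 < d q) {x η : ι → ℝ}
    (h : η ⬝ᵥ (d * η) ≤ x ⬝ᵥ (d * η)) (hx : x ≠ η) : η ⬝ᵥ (d * η) < x ⬝ᵥ (d * x) := by
  have := dotProduct_mul_self_pos hd (sub_ne_zero.2 hx)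
  rw [sub_dotProduct_mul_sub] at this
  linarith

lemma tendsto_zero_of_dotProduct_mul_self (hd : ∀ q, 0 < d q) {Z : ℕ → ι → ℝ}
    (h : Tendsto (fun t => Z t ⬝ᵥ (d * Z t)) atTop (𝓝 0)) : Tendsto Z atTop (𝓝 0) := by
  refine tendsto_pi_nhds.2 fun q => ?_
  have hsq : Tendsto (fun t => Z t q ^ 2) atTop (𝓝 0) := by
    refine squeeze_zero (fun t => sq_nonneg _) (fun t => ?_) (by simpa using h.div_const (d q))
    rw [le_div_iff₀ (hd q)]
    calc Z t q ^ 2 * d q = Z t q * (d * Z t) q := by simp only [Pi.mul_apply]; ring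
      _ ≤ Z t ⬝ᵥ (d * Z t) := single_le_sum (f := fun r => Z t r * (d * Z t) r)
          (fun r _ => by simp only [Pi.mul_apply]; nlinarith [hd r, mul_self_nonneg (Z t r)])
          (mem_univ q)
  have habs := hsq.sqrt
  simp only [Real.sqrt_sq_eq_abs, Real.sqrt_zero] at habs
  exact (tendsto_zero_iff_abs_tendsto_zero _).2 habs

lemma tendsto_div_of_dotProduct_mul_self_div_sq (hd : ∀ q, 0 < d q) {X : ℕ → ι → ℝ} {η : ι → ℝ}
    (h : Tendsto (fun t : ℕ => (X t - (t : ℝ) • η) ⬝ᵥ (d * (X t - (t : ℝ) • η)) / (t : ℝ) ^ 2)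
      atTop (𝓝 0)) :
    Tendsto (fun t : ℕ => fun q => X t q / t) atTop (𝓝 η) := by
  have hZ := tendsto_zero_of_dotProduct_mul_self hd
    (Z := fun t : ℕ => (t : ℝ)⁻¹ • (X t - (t : ℝ) • η))
    (h.congr fun t => by
      rw [smul_dotProduct, mul_smul_comm, dotProduct_smul, smul_eq_mul, smul_eq_mul]
      field_simp)
  have hlim := hZ.add_const η
  rw [zero_add] at hlim
  refine hlim.congr' ((eventually_gt_atTop 0).mono fun t ht => funext fun q => ?_)
  have ht' : (t : ℝ) ≠ 0 := by exact_mod_cast ht.ne'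
  simp only [Pi.add_apply, Pi.smul_apply, Pi.sub_apply, smul_eq_mul]
  field_simp
  ring

end WeightedInner

lemma sq_posPart_le_sq {a b : ℝ} (h : a ≤ b) : a⁺ ^ 2 ≤ b ^ 2 := by
  rcases le_total a 0 with ha | ha
  · rw [posPart_eq_zero.2 ha]; simpa using sq_nonneg b
  · rw [posPart_eq_self.2 ha]; exact pow_le_pow_left₀ ha h 2

lemma posPart_mul_self_eq_mul (a : ℝ) : a⁺ * a⁺ = a * a⁺ := by
  rcases le_total a 0 with ha | ha
  · simp [posPart_eq_zero.2 ha]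
  · rw [posPart_eq_self.2 ha]

lemma nonpos_of_forall_le_mul {a c C : ℝ} (ha : 0 < a)
    (h : ∀ ε, 0 < ε → ε < a → c ≤ ε * C) : c ≤ 0 := by
  have hlim : Tendsto (fun ε => ε * C) (𝓝[>] 0) (𝓝 0) :=
    ((continuous_mul_const C).tendsto' 0 0 (zero_mul C)).mono_left nhdsWithin_le_nhds
  exact ge_of_tendsto hlim (eventually_of_mem (Ioo_mem_nhdsGT ha) fun ε hε => h ε hε.1 hε.2)

section FixedPoint

variable {ι κ : Type*} [Fintype ι] [Fintype κ] {d ρ : ι → ℝ} {S : Matrix κ ι ℝ}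

lemma posPart_sub_dotProduct_le (hd : 0 ≤ d) (a δ : ι → ℝ) :
    (a - δ)⁺ ⬝ᵥ (d * (a - δ)⁺) ≤ (a⁺ - δ) ⬝ᵥ (d * (a⁺ - δ)) :=
  sum_le_sum fun q _ => by
    have := sq_posPart_le_sq (sub_le_sub_right (le_posPart (a q)) (δ q))
    simp only [Pi.mul_apply, Pi.posPart_apply, Pi.sub_apply]
    nlinarith [mul_le_mul_of_nonneg_left this (hd q)]

/-- Moving mass `ε` from `m` to `k` lowers the cost by at least
`2 ε ⟨S k - S m, D η⟩ - ε² ‖S k - S m‖²_D`, so minimality forces `⟨S k - S m, D η⟩ ≤ 0`. -/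
lemma supportedOnMaximizers_of_isMinOn (hd : 0 ≤ d) {α : κ → ℝ} (hα : α ∈ stdSimplex ℝ κ)
    (hmin : IsMinOn (fun β => (ρ - β ᵥ* S)⁺ ⬝ᵥ (d * (ρ - β ᵥ* S)⁺)) (stdSimplex ℝ κ) α) :
    SupportedOnMaximizers α (S *ᵥ (d * (ρ - α ᵥ* S)⁺)) := by
  classical
  intro m hm k
  set η := (ρ - α ᵥ* S)⁺
  set u := S k - S m
  have hfirst : ∀ ε, 0 < ε → ε < α m → 2 * (η ⬝ᵥ (d * u)) ≤ ε * (u ⬝ᵥ (d * u)) := by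
    intro ε hε hεm
    set β := α + ε • (Pi.single k 1 - Pi.single m 1)
    have hβ : β ∈ stdSimplex ℝ κ := by
      refine ⟨fun j => ?_, ?_⟩
      · have := hα.1 j
        simp only [β, Pi.add_apply, Pi.smul_apply, Pi.sub_apply, Pi.single_apply, smul_eq_mul]
        split_ifs <;> subst_vars <;> linarith
      · simp [β, sum_add_distrib, hα.2, ← mul_sum, sum_sub_distrib]
    have hβS : ρ - β ᵥ* S = (ρ - α ᵥ* S) - ε • u := by
      simp only [β, u, add_vecMul, smul_vecMul, sub_vecMul, single_one_vecMul, smul_sub]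
      abel
    have hcost := (isMinOn_iff.1 hmin β hβ).trans
      (hβS ▸ posPart_sub_dotProduct_le hd (ρ - α ᵥ* S) (ε • u))
    rw [sub_dotProduct_mul_sub, mul_smul_comm, dotProduct_smul, smul_dotProduct,
      dotProduct_smul, smul_eq_mul, smul_eq_mul, smul_eq_mul] at hcost
    exact le_of_mul_le_mul_left (by linarith) hε
  have hu : η ⬝ᵥ (d * u) ≤ 0 := by
    have := nonpos_of_forall_le_mul hm (C := u ⬝ᵥ (d * u)) fun ε hε hεm => hfirst ε hε hεm
    linarith
  rw [dotProduct_mul_comm, sub_dotProduct] at hu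
  exact sub_nonpos.1 hu

lemma exists_supportedOnMaximizers [Nonempty κ] (hd : 0 ≤ d) :
    ∃ α ∈ stdSimplex ℝ κ, SupportedOnMaximizers α (S *ᵥ (d * (ρ - α ᵥ* S)⁺)) := by
  classical
  have hcont : Continuous fun β : κ → ℝ => (ρ - β ᵥ* S)⁺ := continuous_pi fun q =>
    continuous_posPart.comp ((continuous_apply q).comp
      (continuous_const.sub (continuous_id.matrix_vecMul continuous_const)))
  obtain ⟨α, hα, hmin⟩ := (isCompact_stdSimplex ℝ κ).exists_isMinOn
    ⟨_, single_mem_stdSimplex ℝ (Classical.arbitrary κ)⟩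
    (hcont.dotProduct (continuous_const.mul hcont)).continuousOn
  exact ⟨α, hα, supportedOnMaximizers_of_isMinOn hd hα hmin⟩

lemma posPart_dotProduct_le_of_supportedOnMaximizers (hd : 0 ≤ d) (hS : ∀ m, 0 ≤ S m)
    {α β : κ → ℝ} (hα : α ∈ stdSimplex ℝ κ)
    (hkkt : SupportedOnMaximizers α (S *ᵥ (d * (ρ - α ᵥ* S)⁺))) (hβ0 : 0 ≤ β)
    (hβ1 : ∑ m, β m ≤ 1) :
    (ρ - α ᵥ* S)⁺ ⬝ᵥ (d * (ρ - α ᵥ* S)⁺) ≤ (ρ - β ᵥ* S)⁺ ⬝ᵥ (d * (ρ - α ᵥ* S)⁺) := by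
  set η := (ρ - α ᵥ* S)⁺
  have hdη : 0 ≤ d * η := mul_nonneg hd (posPart_nonneg _)
  have hw : 0 ≤ S *ᵥ (d * η) := fun k => dotProduct_nonneg_of_nonneg (hS k) hdη
  calc η ⬝ᵥ (d * η) = (ρ - α ᵥ* S) ⬝ᵥ (d * η) :=
        sum_congr rfl fun q _ => by
          simp only [Pi.mul_apply, η, Pi.posPart_apply]
          rw [mul_left_comm, posPart_mul_self_eq_mul, mul_left_comm]
    _ = ρ ⬝ᵥ (d * η) - α ⬝ᵥ (S *ᵥ (d * η)) := by rw [sub_dotProduct, dotProduct_mulVec]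
    _ ≤ ρ ⬝ᵥ (d * η) - β ⬝ᵥ (S *ᵥ (d * η)) := by
        gcongr
        exact dotProduct_le_of_forall_le hβ0 hβ1 (hkkt.le_dotProduct hα)
          (dotProduct_nonneg_of_nonneg hα.1 hw)
    _ = (ρ - β ᵥ* S) ⬝ᵥ (d * η) := by rw [sub_dotProduct, dotProduct_mulVec]
    _ ≤ (ρ - β ᵥ* S)⁺ ⬝ᵥ (d * η) :=
        sum_le_sum fun q _ => mul_le_mul_of_nonneg_right (le_posPart _) (hdη q)

lemma posPart_dotProduct_lt_of_supportedOnMaximizers (hd : ∀ q, 0 < d q) (hS : ∀ m, 0 ≤ S m)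
    {α β : κ → ℝ} (hα : α ∈ stdSimplex ℝ κ)
    (hkkt : SupportedOnMaximizers α (S *ᵥ (d * (ρ - α ᵥ* S)⁺))) (hβ0 : 0 ≤ β)
    (hβ1 : ∑ m, β m ≤ 1) (hne : (ρ - β ᵥ* S)⁺ ≠ (ρ - α ᵥ* S)⁺) :
    (ρ - α ᵥ* S)⁺ ⬝ᵥ (d * (ρ - α ᵥ* S)⁺) < (ρ - β ᵥ* S)⁺ ⬝ᵥ (d * (ρ - β ᵥ* S)⁺) :=
  dotProduct_mul_self_lt_of_dotProduct_le hd
    (posPart_dotProduct_le_of_supportedOnMaximizers (fun q => (hd q).le) hS hα hkkt hβ0 hβ1) hne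

lemma posPart_eq_of_supportedOnMaximizers (hd : ∀ q, 0 < d q) (hS : ∀ m, 0 ≤ S m)
    {α β : κ → ℝ} (hα : α ∈ stdSimplex ℝ κ) (hβ : β ∈ stdSimplex ℝ κ)
    (hα' : SupportedOnMaximizers α (S *ᵥ (d * (ρ - α ᵥ* S)⁺)))
    (hβ' : SupportedOnMaximizers β (S *ᵥ (d * (ρ - β ᵥ* S)⁺))) :
    (ρ - β ᵥ* S)⁺ = (ρ - α ᵥ* S)⁺ := by
  by_contra hne
  exact lt_asymm (posPart_dotProduct_lt_of_supportedOnMaximizers hd hS hα hα' hβ.1 hβ.2.le hne)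
    (posPart_dotProduct_lt_of_supportedOnMaximizers hd hS hβ hβ' hα.1 hα.2.le (Ne.symm hne))

end FixedPoint

lemma le_of_tendsto_average {f : ℕ → ℝ} {c l : ℝ} (hf : ∀ s, f s ≤ c)
    (h : Tendsto (fun t : ℕ => (∑ s ∈ range t, f s) / t) atTop (𝓝 l)) : l ≤ c := by
  refine le_of_tendsto h ((eventually_gt_atTop 0).mono fun t ht => ?_)
  rw [div_le_iff₀ (by exact_mod_cast ht)]
  simpa [mul_comm] using sum_le_card_nsmul (range t) f c fun s _ => hf s

lemma ge_of_tendsto_average {f : ℕ → ℝ} {c l : ℝ} (hf : ∀ s, c ≤ f s)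
    (h : Tendsto (fun t : ℕ => (∑ s ∈ range t, f s) / t) atTop (𝓝 l)) : c ≤ l :=
  neg_le_neg_iff.1 <| le_of_tendsto_average (f := fun s => -f s) (fun s => neg_le_neg (hf s))
    (by simpa [sum_neg_distrib, neg_div] using h.neg)

lemma tendsto_average_sub {f : ℕ → ℝ} {l : ℝ}
    (h : Tendsto (fun t : ℕ => (∑ s ∈ range t, f s) / t) atTop (𝓝 l)) :
    Tendsto (fun t : ℕ => (∑ s ∈ range t, (f s - l)) / t) atTop (𝓝 0) := by
  refine (tendsto_sub_nhds_zero_iff.2 h).congr' ((eventually_gt_atTop 0).mono fun t ht => ?_)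
  dsimp only
  rw [sum_sub_distrib, sum_const, card_range, nsmul_eq_mul, sub_div,
    mul_div_cancel_left₀ _ (by exact_mod_cast ht.ne')]

lemma tendsto_sum_abs_div_sq {b : ℕ → ℝ} (hb : Tendsto (fun t : ℕ => b t / t) atTop (𝓝 0)) :
    Tendsto (fun t : ℕ => (∑ s ∈ range t, |b (s + 1)|) / (t : ℝ) ^ 2) atTop (𝓝 0) := by
  have hu : Tendsto (fun s : ℕ => |b (s + 1)| / ((s + 1 : ℕ) : ℝ)) atTop (𝓝 0) := by
    have := (hb.comp (tendsto_add_atTop_nat 1)).abs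
    simp only [Function.comp_def, abs_div, Nat.abs_cast, abs_zero] at this
    exact this
  refine squeeze_zero (fun t => by positivity) (fun t => ?_) hu.cesaro
  rw [sq, ← div_div, sum_div, div_eq_inv_mul]
  gcongr with s hs
  exact_mod_cast mem_range.1 hs

lemma tendsto_sum_mul_div_sq {Y e : ℕ → ℝ} {K : ℝ} (hY0 : Y 0 = 0)
    (hY : ∀ s, |Y (s + 1) - Y s| ≤ K)
    (he : Tendsto (fun t : ℕ => (∑ s ∈ range t, e s) / t) atTop (𝓝 0)) :
    Tendsto (fun t : ℕ => (∑ s ∈ range t, Y s * e s) / (t : ℝ) ^ 2) atTop (𝓝 0) := by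
  set b := fun t => ∑ s ∈ range t, e s
  have hK : 0 ≤ K := (abs_nonneg _).trans (hY 0)
  have hYle : ∀ s, |Y s| ≤ K * s := by
    intro s
    induction s with
    | zero => simp [hY0]
    | succ s ih =>
      have := abs_sub_abs_le_abs_sub (Y (s + 1)) (Y s)
      push_cast
      linarith [hY s]
  have hparts : ∀ t,
      |∑ s ∈ range t, Y s * e s| ≤ K * t * |b t| + K * ∑ s ∈ range t, |b (s + 1)| := by
    intro t
    have h := sum_range_by_parts Y e t
    simp only [smul_eq_mul] at h
    rw [h]
    refine (abs_sub _ _).trans (add_le_add ?_ ?_)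
    · rw [abs_mul]
      gcongr
      exact (hYle _).trans (mul_le_mul_of_nonneg_left (by exact_mod_cast Nat.sub_le t 1) hK)
    · calc |∑ s ∈ range (t - 1), (Y (s + 1) - Y s) * b (s + 1)|
          ≤ ∑ s ∈ range (t - 1), K * |b (s + 1)| :=
            (abs_sum_le_sum_abs _ _).trans
              (sum_le_sum fun s _ => by rw [abs_mul]; gcongr; exact hY s)
        _ ≤ ∑ s ∈ range t, K * |b (s + 1)| :=
            sum_le_sum_of_subset_of_nonneg (range_subset_range.2 (Nat.sub_le t 1))
              fun _ _ _ => by positivity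
        _ = K * ∑ s ∈ range t, |b (s + 1)| := (mul_sum _ _ _).symm
  have hlim : Tendsto
      (fun t : ℕ => K * |b t / t| + K * ((∑ s ∈ range t, |b (s + 1)|) / (t : ℝ) ^ 2))
      atTop (𝓝 0) := by
    simpa using (he.abs.const_mul K).add ((tendsto_sum_abs_div_sq he).const_mul K)
  refine squeeze_zero_norm' ((eventually_gt_atTop 0).mono fun t ht => ?_) hlim
  have ht' : (t : ℝ) ≠ 0 := by exact_mod_cast ht.ne'
  calc ‖(∑ s ∈ range t, Y s * e s) / (t : ℝ) ^ 2‖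
      ≤ (K * t * |b t| + K * ∑ s ∈ range t, |b (s + 1)|) / (t : ℝ) ^ 2 := by
        rw [Real.norm_eq_abs, abs_div, abs_of_nonneg (by positivity : (0 : ℝ) ≤ (t : ℝ) ^ 2)]
        gcongr
        exact hparts t
    _ = K * |b t / t| + K * ((∑ s ∈ range t, |b (s + 1)|) / (t : ℝ) ^ 2) := by
        rw [abs_div, Nat.abs_cast]
        field_simp

lemma tendsto_div_sq_of_drift {V N : ℕ → ℝ} {C : ℝ} (hV0 : V 0 = 0) (hV : ∀ t, 0 ≤ V t)
    (hdrift : ∀ t, V (t + 1) ≤ V t + N t + C)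
    (hN : Tendsto (fun t : ℕ => (∑ s ∈ range t, N s) / (t : ℝ) ^ 2) atTop (𝓝 0)) :
    Tendsto (fun t : ℕ => V t / (t : ℝ) ^ 2) atTop (𝓝 0) := by
  have hsum : ∀ t, V t ≤ ∑ s ∈ range t, N s + C * t := by
    intro t
    induction t with
    | zero => simp [hV0]
    | succ t ih => rw [sum_range_succ]; push_cast; linarith [hdrift t]
  have hlim : Tendsto (fun t : ℕ => (∑ s ∈ range t, N s) / (t : ℝ) ^ 2 + C / t) atTop (𝓝 0) := by
    simpa using hN.add (tendsto_const_div_atTop_nhds_zero_nat C)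
  refine squeeze_zero' (Eventually.of_forall fun t => by have := hV t; positivity)
    ((eventually_gt_atTop 0).mono fun t ht => ?_) hlim
  have ht' : (t : ℝ) ≠ 0 := by exact_mod_cast ht.ne'
  calc V t / (t : ℝ) ^ 2 ≤ (∑ s ∈ range t, N s + C * t) / (t : ℝ) ^ 2 := by gcongr; exact hsum t
    _ = _ := by field_simp

lemma tendsto_sum_dotProduct_div_sq {ι : Type*} [Fintype ι] (d : ι → ℝ) {Y e : ℕ → ι → ℝ}
    {K : ι → ℝ} (hY0 : Y 0 = 0) (hY : ∀ s q, |Y (s + 1) q - Y s q| ≤ K q)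
    (he : ∀ q, Tendsto (fun t : ℕ => (∑ s ∈ range t, e s q) / t) atTop (𝓝 0)) :
    Tendsto (fun t : ℕ => (∑ s ∈ range t, Y s ⬝ᵥ (d * e s)) / (t : ℝ) ^ 2) atTop (𝓝 0) := by
  have h : ∀ t : ℕ, (∑ s ∈ range t, Y s ⬝ᵥ (d * e s)) / (t : ℝ) ^ 2 =
      ∑ q, d q * ((∑ s ∈ range t, Y s q * e s q) / (t : ℝ) ^ 2) := by
    intro t
    simp only [dotProduct, Pi.mul_apply]
    rw [sum_comm, sum_div]
    refine sum_congr rfl fun q _ => ?_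
    rw [mul_div_assoc', mul_sum]
    exact congrArg (· / (t : ℝ) ^ 2) (sum_congr rfl fun s _ => by ring)
  simp only [h]
  simpa using tendsto_finsetSum univ fun q _ =>
    (tendsto_sum_mul_div_sq (congrFun hY0 q) (hY · q) (he q)).const_mul (d q)

lemma workload_nonneg {ι : Type*} {A s X : ℕ → ι → ℝ} (hA : ∀ t, 0 ≤ A t) (hX0 : X 0 = 0)
    (hX : ∀ t, X (t + 1) = X t + A t - s t ⊓ X t) (t : ℕ) : 0 ≤ X t := by
  induction t with
  | zero => exact hX0.ge
  | succ t _ => rw [hX t]; exact sub_nonneg.2 (inf_le_right.trans (le_add_of_nonneg_right (hA t)))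

lemma abs_sub_min_sub_le {a c s x e : ℝ} (ha : 0 ≤ a) (hac : a ≤ c) (hs : 0 ≤ s) (hx : 0 ≤ x)
    (he : 0 ≤ e) (hec : e ≤ c) : |a - min s x - e| ≤ c + s :=
  abs_le.2 ⟨by linarith [min_le_left s x], by linarith [le_min hs hx]⟩

section MaxWeight

variable {ι κ : Type*} [Fintype ι] [Fintype κ] {d ρ : ι → ℝ} {S : Matrix κ ι ℝ} {α : κ → ℝ}

lemma dotProduct_sub_posPart_nonpos (hd : 0 ≤ d) {x : ι → ℝ} (hx : 0 ≤ x) (τ : ℝ) (a : ι → ℝ) :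
    (x - τ • a⁺) ⬝ᵥ (d * (a - a⁺)) ≤ 0 :=
  sum_nonpos fun q _ => by
    simp only [Pi.sub_apply, Pi.smul_apply, smul_eq_mul, Pi.mul_apply, Pi.posPart_apply]
    have hcompl : (x q - τ * (a q)⁺) * (d q * (a q - (a q)⁺)) = x q * d q * (a q - (a q)⁺) := by
      linear_combination (τ * d q) * posPart_mul_self_eq_mul (a q)
    rw [hcompl]
    exact mul_nonpos_of_nonneg_of_nonpos (mul_nonneg (hx q) (hd q)) (sub_nonpos.2 (le_posPart _))

/-- One step of the drift of `‖X t - t η‖²_D`, with `x = X t`, `τ = t`, `a = A t` and `S j` the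
MaxWeight schedule at `x`. -/
lemma maxWeight_drift_le (hd : 0 ≤ d) (hS : ∀ m, 0 ≤ S m) (hα : α ∈ stdSimplex ℝ κ)
    (hkkt : SupportedOnMaximizers α (S *ᵥ (d * (ρ - α ᵥ* S)⁺))) {x : ι → ℝ} (hx : 0 ≤ x) {j : κ}
    (hj : ∀ i, S i ⬝ᵥ (d * x) ≤ S j ⬝ᵥ (d * x)) {τ : ℝ} (hτ : 0 ≤ τ) (a : ι → ℝ) :
    (x - τ • (ρ - α ᵥ* S)⁺) ⬝ᵥ (d * (a - S j ⊓ x - (ρ - α ᵥ* S)⁺)) ≤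
      (x - τ • (ρ - α ᵥ* S)⁺) ⬝ᵥ (d * (a - ρ)) + S j ⬝ᵥ (d * S j) := by
  set η := (ρ - α ᵥ* S)⁺
  set D := S j ⊓ x
  have hmix : (α ᵥ* S) ⬝ᵥ (d * x) ≤ S j ⬝ᵥ (d * x) := by
    rw [← dotProduct_mulVec]
    exact dotProduct_le_of_forall_le hα.1 hα.2.le hj
      (dotProduct_nonneg_of_nonneg (hS j) (mul_nonneg hd hx))
  have hidle : (S j - D) ⬝ᵥ (d * x) ≤ S j ⬝ᵥ (d * S j) := sum_le_sum fun q _ => by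
    simp only [D, Pi.sub_apply, Pi.mul_apply, Pi.inf_apply]
    have hs : 0 ≤ S j q := hS j q
    rcases le_total (S j q) (x q) with h | h
    · rw [inf_eq_left.2 h, sub_self, zero_mul]; exact mul_nonneg hs (mul_nonneg (hd q) hs)
    · rw [inf_eq_right.2 h]
      have hxq : 0 ≤ x q := hx q
      have := mul_le_mul (sub_le_self _ hxq) h hxq hs
      nlinarith [mul_le_mul_of_nonneg_left this (hd q)]
  have hfluid : D ⬝ᵥ (d * η) ≤ (α ᵥ* S) ⬝ᵥ (d * η) :=
    calc D ⬝ᵥ (d * η) ≤ S j ⬝ᵥ (d * η) :=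
          dotProduct_le_dotProduct_of_nonneg_right inf_le_left (mul_nonneg hd (posPart_nonneg _))
      _ ≤ α ⬝ᵥ (S *ᵥ (d * η)) := hkkt.le_dotProduct hα j
      _ = (α ᵥ* S) ⬝ᵥ (d * η) := dotProduct_mulVec _ _ _
  have hcompl : (x - τ • η) ⬝ᵥ (d * ((ρ - α ᵥ* S) - η)) ≤ 0 :=
    dotProduct_sub_posPart_nonpos hd hx τ (ρ - α ᵥ* S)
  have hserved : (x - τ • η) ⬝ᵥ (d * (α ᵥ* S - D)) =
      ((α ᵥ* S) ⬝ᵥ (d * x) - D ⬝ᵥ (d * x)) - τ * ((α ᵥ* S) ⬝ᵥ (d * η) - D ⬝ᵥ (d * η)) := by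
    rw [sub_dotProduct, smul_dotProduct, smul_eq_mul, dotProduct_mul_comm d x,
      dotProduct_mul_comm d η, sub_dotProduct, sub_dotProduct]
  have hsplit : a - D - η = (a - ρ) + ((ρ - α ᵥ* S) - η) + (α ᵥ* S - D) := by abel
  rw [hsplit, mul_add, mul_add, dotProduct_add, dotProduct_add, hserved]
  rw [sub_dotProduct] at hidle
  nlinarith [mul_nonneg hτ (sub_nonneg.2 hfluid)]

theorem tendsto_workload_div_of_maxWeight {A : ℕ → ι → ℝ} {Abar : ι → ℝ} {σ : ℕ → κ}
    {X : ℕ → ι → ℝ} (hA0 : ∀ t q, 0 ≤ A t q) (hAbar : ∀ t q, A t q ≤ Abar q)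
    (hρ : ∀ q, Tendsto (fun t : ℕ => (∑ s ∈ range t, A s q) / t) atTop (𝓝 (ρ q)))
    (hS : ∀ m q, 0 ≤ S m q) (hd : ∀ q, 0 < d q) (hX0 : X 0 = 0)
    (hX : ∀ t, X (t + 1) = X t + A t - S (σ t) ⊓ X t)
    (hMW : ∀ t j, S j ⬝ᵥ (d * X t) ≤ S (σ t) ⬝ᵥ (d * X t))
    (hα : α ∈ stdSimplex ℝ κ) (hkkt : SupportedOnMaximizers α (S *ᵥ (d * (ρ - α ᵥ* S)⁺))) :
    Tendsto (fun t : ℕ => fun q => X t q / t) atTop (𝓝 (ρ - α ᵥ* S)⁺) := by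
  set η := (ρ - α ᵥ* S)⁺
  set Y : ℕ → ι → ℝ := fun t => X t - (t : ℝ) • η
  set K : ι → ℝ := fun q => Abar q + ∑ m, S m q
  have hd0 : 0 ≤ d := fun q => (hd q).le
  have hXnn := workload_nonneg hA0 hX0 hX
  have hSK : ∀ m q, |S m q| ≤ K q := fun m q => by
    rw [abs_of_nonneg (hS m q)]
    linarith [(hA0 0 q).trans (hAbar 0 q), single_le_sum (fun i _ => hS i q) (mem_univ m)]
  have hηA : η ≤ Abar := fun q => by
    have hρA := le_of_tendsto_average (fun s => hAbar s q) (hρ q)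
    have hαS : 0 ≤ (α ᵥ* S) q :=
      dotProduct_nonneg_of_nonneg (w := fun m => S m q) hα.1 fun m => hS m q
    exact sup_le (show ρ q - (α ᵥ* S) q ≤ Abar q by linarith) ((hA0 0 q).trans (hAbar 0 q))
  have hYsucc : ∀ t, Y (t + 1) = Y t + (A t - S (σ t) ⊓ X t - η) := fun t => by
    simp only [Y, hX t]
    push_cast
    rw [add_smul, one_smul]
    abel
  have hΔ : ∀ t q, |(A t - S (σ t) ⊓ X t - η) q| ≤ K q := fun t q =>
    (abs_sub_min_sub_le (hA0 t q) (hAbar t q) (hS (σ t) q) (hXnn t q) (posPart_nonneg _)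
      (hηA q)).trans (add_le_add le_rfl (single_le_sum (fun i _ => hS i q) (mem_univ (σ t))))
  have hdrift : ∀ t, Y (t + 1) ⬝ᵥ (d * Y (t + 1)) ≤
      Y t ⬝ᵥ (d * Y t) + 2 * (Y t ⬝ᵥ (d * (A t - ρ))) + 3 * (K ⬝ᵥ (d * K)) := fun t => by
    rw [hYsucc, add_dotProduct_mul_add]
    have := maxWeight_drift_le hd0 hS hα hkkt (hXnn t) (hMW t) t.cast_nonneg (A t)
    have := dotProduct_mul_self_le hd0 (hΔ t)
    have := dotProduct_mul_self_le hd0 (hSK (σ t))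
    linarith
  have hY0 : Y 0 = 0 := by simp [Y, hX0]
  have hnoise := tendsto_sum_dotProduct_div_sq d (e := fun s => A s - ρ) hY0
    (fun s q => by rw [hYsucc]; simpa using hΔ s q) fun q => tendsto_average_sub (hρ q)
  exact tendsto_div_of_dotProduct_mul_self_div_sq hd
    (tendsto_div_sq_of_drift (V := fun t => Y t ⬝ᵥ (d * Y t)) (by simp only [hY0, zero_dotProduct])
      (fun t => dotProduct_mul_self_nonneg hd0 (Y t)) hdrift
      (by simpa only [mul_zero, mul_div_assoc', mul_sum] using hnoise.const_mul 2))

end MaxWeight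

theorem stmt1_general {Q N : ℕ} (hN : 0 < N)
    (A : ℕ → Fin Q → ℝ) (Abar : Fin Q → ℝ)
    (hA0 : ∀ t q, 0 ≤ A t q) (hAbar : ∀ t q, A t q ≤ Abar q)
    (ρ : Fin Q → ℝ)
    (hρ : ∀ q, Tendsto (fun t : ℕ => (∑ s ∈ Finset.range t, A s q) / (t : ℝ))
      atTop (𝓝 (ρ q)))
    (S : Fin N → Fin Q → ℝ) (hS : ∀ i q, 0 ≤ S i q)
    (σ : ℕ → Fin N)
    (d : Fin Q → ℝ) (hd : ∀ q, 0 < d q)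
    (X : ℕ → Fin Q → ℝ) (hX0 : ∀ q, X 0 q = 0)
    (hXrec : ∀ t q, X (t + 1) q = X t q + A t q - min (S (σ t) q) (X t q))
    (hMW : ∀ t j, ∑ q, S j q * (d q * X t q) ≤ ∑ q, S (σ t) q * (d q * X t q))
    (hover : ρ ∉ stabRegion S) :
    ∃ η : Fin Q → ℝ,
      Tendsto (fun t : ℕ => fun q => X t q / (t : ℝ)) atTop (𝓝 η) ∧
      η ≠ 0 ∧
      η ∈ Psi ρ S ∧
      (∀ x ∈ Psi ρ S, x ≠ η →
        ∑ q, η q * (d q * η q) < ∑ q, x q * (d q * x q)) ∧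
      (∃ α : Fin N → ℝ, (∀ m, 0 ≤ α m) ∧ (∑ m, α m) = 1 ∧
        (η = fun q => max (ρ q - ∑ m, α m * S m q) 0) ∧
        ∀ m, 0 < α m → ∀ k,
          ∑ q, S k q * (d q * η q) ≤ ∑ q, S m q * (d q * η q)) ∧
      (∀ η' : Fin Q → ℝ,
        (∃ α : Fin N → ℝ, (∀ m, 0 ≤ α m) ∧ (∑ m, α m) = 1 ∧
          (η' = fun q => max (ρ q - ∑ m, α m * S m q) 0) ∧
          ∀ m, 0 < α m → ∀ k,
            ∑ q, S k q * (d q * η' q) ≤ ∑ q, S m q * (d q * η' q)) →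
        η' = η) := by
  have : Nonempty (Fin N) := ⟨⟨0, hN⟩⟩
  obtain ⟨α, hα, hkkt⟩ := exists_supportedOnMaximizers (ρ := ρ) (S := S) fun q => (hd q).le
  refine ⟨(ρ - α ᵥ* S)⁺, tendsto_workload_div_of_maxWeight hA0 hAbar hρ hS hd (funext hX0)
    (fun t => funext (hXrec t)) hMW hα hkkt, fun h0 => hover ?_, ⟨α, hα.1, hα.2.le, rfl⟩, ?_,
    ⟨α, hα.1, hα.2, rfl, hkkt⟩, ?_⟩
  · refine ⟨fun q => ge_of_tendsto_average (fun s => hA0 s q) (hρ q), α, hα.1, hα.2, fun q => ?_⟩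
    exact sub_nonpos.1 (posPart_eq_zero.1 (congrFun h0 q))
  · rintro x ⟨β, hβ0, hβ1, rfl⟩ hne
    exact posPart_dotProduct_lt_of_supportedOnMaximizers hd hS hα hkkt hβ0 hβ1 hne
  · rintro η' ⟨α', hα'0, hα'1, rfl, hkkt'⟩
    exact posPart_eq_of_supportedOnMaximizers hd hS hα ⟨hα'0, hα'1⟩ hkkt hkkt'

/-- under MaxWeight in overload, X(t)/t converges to a nonzero η, which is the
unique minimizer of ⟨x, D x⟩ over Ψ(ρ,𝒮), and equivalently the unique fixed point. -/
theorem stmt1 {Q N : ℕ} (hQ : 0 < Q) (hN : 0 < N)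
    (A : ℕ → Fin Q → ℝ) (Abar : Fin Q → ℝ)
    (hA0 : ∀ t q, 0 ≤ A t q) (hAbar : ∀ t q, A t q ≤ Abar q)
    (ρ : Fin Q → ℝ) (hρpos : ∀ q, 0 < ρ q)
    (hρ : ∀ q, Tendsto (fun t : ℕ => (∑ s ∈ Finset.range t, A s q) / (t : ℝ))
      atTop (𝓝 (ρ q)))
    (S : Fin N → Fin Q → ℝ) (hS : ∀ i q, 0 ≤ S i q)
    (σ : ℕ → Fin N)
    (d : Fin Q → ℝ) (hd : ∀ q, 0 < d q)
    (X : ℕ → Fin Q → ℝ) (hX0 : ∀ q, X 0 q = 0)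
    (hXrec : ∀ t q, X (t + 1) q = X t q + A t q - min (S (σ t) q) (X t q))
    (hMW : ∀ t j, ∑ q, S j q * (d q * X t q) ≤ ∑ q, S (σ t) q * (d q * X t q))
    (hover : ρ ∉ stabRegion S) :
    ∃ η : Fin Q → ℝ,
      Tendsto (fun t : ℕ => fun q => X t q / (t : ℝ)) atTop (𝓝 η) ∧
      η ≠ 0 ∧
      η ∈ Psi ρ S ∧
      (∀ x ∈ Psi ρ S, x ≠ η →
        ∑ q, η q * (d q * η q) < ∑ q, x q * (d q * x q)) ∧
      (∃ α : Fin N → ℝ, (∀ m, 0 ≤ α m) ∧ (∑ m, α m) = 1 ∧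
        (η = fun q => max (ρ q - ∑ m, α m * S m q) 0) ∧
        ∀ m, 0 < α m → ∀ k,
          ∑ q, S k q * (d q * η q) ≤ ∑ q, S m q * (d q * η q)) ∧
      (∀ η' : Fin Q → ℝ,
        (∃ α : Fin N → ℝ, (∀ m, 0 ≤ α m) ∧ (∑ m, α m) = 1 ∧
          (η' = fun q => max (ρ q - ∑ m, α m * S m q) 0) ∧
          ∀ m, 0 < α m → ∀ k,
            ∑ q, S k q * (d q * η' q) ≤ ∑ q, S m q * (d q * η' q)) →
        η' = η) :=
  stmt1_general hN A Abar hA0 hAbar ρ hρ S hS σ d hd X hX0 hXrec hMW hover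
end

section
/- Let A : ℕ → ℝ^Q be a bounded nonnegative sequence whose Cesàro averages converge: lim_{T→∞} (1/T)·Σ_{t=0}^{T−1} A(t) = ρ. If {t_n} and {t'_n} are increasing unbounded sequences of naturals with t'_n < t_n for all large n and lim_{n→∞} (t_n − t'_n)/t_n = χ ∈ (0,1], then lim_{n→∞} (1/(t_n − t'_n))·Σ_{t=t'_n}^{t_n−1} A(t) = ρ. -/
/-!
Write `m̄ = (1/m) ∑_{τ<m} a τ` for the Cesàro mean. The average of `a` over `[m, n)` equals
`m̄ + (n̄ - m̄) · n / (n - m)`. Along `m = t' k`, `n = t k`, both means tend to `ρ`, while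
`n / (n - m)` tends to `χ⁻¹`, which is finite because `χ ≠ 0`; so the window average tends to `ρ`.
-/

open Finset Filter Topology

noncomputable def cesaroMean (a : ℕ → ℝ) (T : ℕ) : ℝ :=
  (∑ τ ∈ range T, a τ) / T

lemma natCast_mul_cesaroMean (a : ℕ → ℝ) (T : ℕ) :
    (T : ℝ) * cesaroMean a T = ∑ τ ∈ range T, a τ := by
  rcases eq_or_ne T 0 with rfl | hT
  · simp
  · exact mul_div_cancel₀ _ (Nat.cast_ne_zero.2 hT)

lemma sum_Ico_div_eq_cesaroMean_add {a : ℕ → ℝ} {m n : ℕ} (hmn : m < n) :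
    (∑ τ ∈ Ico m n, a τ) / ((n : ℝ) - m) =
      cesaroMean a m + (cesaroMean a n - cesaroMean a m) * ((n : ℝ) / ((n : ℝ) - m)) := by
  have hlen : (n : ℝ) - m ≠ 0 := sub_ne_zero.2 (Nat.cast_lt.2 hmn).ne'
  rw [sum_Ico_eq_sub _ hmn.le, ← natCast_mul_cesaroMean, ← natCast_mul_cesaroMean]
  field_simp
  ring

theorem tendsto_sum_Ico_div_of_tendsto_cesaroMean {a : ℕ → ℝ} {ρ χ : ℝ}
    (ha : Tendsto (cesaroMean a) atTop (𝓝 ρ)) {t t' : ℕ → ℕ}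
    (ht : Tendsto t atTop atTop) (ht' : Tendsto t' atTop atTop)
    (hlt : ∀ᶠ n in atTop, t' n < t n) (hχ : χ ≠ 0)
    (hratio : Tendsto (fun n => ((t n : ℝ) - t' n) / t n) atTop (𝓝 χ)) :
    Tendsto (fun n => (∑ τ ∈ Ico (t' n) (t n), a τ) / ((t n : ℝ) - t' n)) atTop (𝓝 ρ) := by
  have hinv : Tendsto (fun n => (t n : ℝ) / ((t n : ℝ) - t' n)) atTop (𝓝 χ⁻¹) := by
    simpa only [inv_div] using hratio.inv₀ hχ
  have hlim := (ha.comp ht').add (((ha.comp ht).sub (ha.comp ht')).mul hinv)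
  rw [sub_self, zero_mul, add_zero] at hlim
  refine hlim.congr' ?_
  filter_upwards [hlt] with n hn
  exact (sum_Ico_div_eq_cesaroMean_add hn).symm

theorem stmt3_general {Q : ℕ}
    (A : ℕ → Fin Q → ℝ)
    (ρ : Fin Q → ℝ)
    (hρ : Tendsto (fun T : ℕ => fun q => (∑ t ∈ Finset.range T, A t q) / (T : ℝ))
      atTop (𝓝 ρ))
    (t t' : ℕ → ℕ) (ht : StrictMono t) (ht' : StrictMono t')
    (hlt : ∀ᶠ n in atTop, t' n < t n)
    (χ : ℝ) (hχ : χ ∈ Set.Ioc (0 : ℝ) 1)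
    (hratio : Tendsto (fun n => ((t n : ℝ) - (t' n : ℝ)) / (t n : ℝ)) atTop (𝓝 χ)) :
    Tendsto
      (fun n => fun q => (∑ τ ∈ Finset.Ico (t' n) (t n), A τ q) / ((t n : ℝ) - (t' n : ℝ)))
      atTop (𝓝 ρ) :=
  tendsto_pi_nhds.2 fun q =>
    tendsto_sum_Ico_div_of_tendsto_cesaroMean (tendsto_pi_nhds.1 hρ q) ht.tendsto_atTop
      ht'.tendsto_atTop hlt hχ.1.ne' hratio

/-- Cesàro averages over sub-intervals that grow linearly in time converge
to the same long-run average ρ. -/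
theorem stmt3 {Q : ℕ}
    (A : ℕ → Fin Q → ℝ) (Abar : Fin Q → ℝ)
    (hA0 : ∀ t q, 0 ≤ A t q) (hAbar : ∀ t q, A t q ≤ Abar q)
    (ρ : Fin Q → ℝ)
    (hρ : Tendsto (fun T : ℕ => fun q => (∑ t ∈ Finset.range T, A t q) / (T : ℝ))
      atTop (𝓝 ρ))
    (t t' : ℕ → ℕ) (ht : StrictMono t) (ht' : StrictMono t')
    (hlt : ∀ᶠ n in atTop, t' n < t n)
    (χ : ℝ) (hχ : χ ∈ Set.Ioc (0 : ℝ) 1)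
    (hratio : Tendsto (fun n => ((t n : ℝ) - (t' n : ℝ)) / (t n : ℝ)) atTop (𝓝 χ)) :
    Tendsto
      (fun n => fun q => (∑ τ ∈ Finset.Ico (t' n) (t n), A τ q) / ((t n : ℝ) - (t' n : ℝ)))
      atTop (𝓝 ρ) :=
  stmt3_general A ρ hρ t t' ht ht' hlt χ hχ hratio
end

section
/- Let the system be operated under an arbitrary scheduling policy and let D be a diagonal Q×Q matrix with D_{qq} > 0 for every q. Suppose {t_c} is an increasing unbounded sequence of naturals with lim_{c→∞} X(t_c)/t_c = η ∈ ℝ_{≥0}^Q and ⟨η, D·η⟩ = limsup_{t→∞} ⟨X(t)/t, D·(X(t)/t)⟩. Then for every ε ∈ (0,1): −[⟨ρ, D·η⟩ − max_{S∈𝒮} ⟨S, D·η⟩]·ε/(1−ε) + ⟨η, D·η⟩·1/(1−ε) ≥ ⟨η, D·η⟩. -/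
/-!
Under any policy the workload of queue `q` is at least its cumulative arrivals minus its
cumulative offered service, since `min (S q) (X q) ≤ S q`. Pairing with the nonnegative weight
`w = D η` and bounding each offered service by `max_S ⟨S, w⟩`, then dividing by `t_c` and letting
`c → ∞`, gives `⟨ρ, Dη⟩ ≤ ⟨η, Dη⟩ + max_S ⟨S, Dη⟩`. Multiplied by `1 - ε > 0`, the claimed
inequality reads `ε · (⟨η, Dη⟩ + max_S ⟨S, Dη⟩ - ⟨ρ, Dη⟩) ≥ 0`.
-/

open Finset Filter Topology

theorem sum_arrivals_sub_sum_service_le_workload {x a s : ℕ → ℝ} (hx0 : x 0 = 0)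
    (hrec : ∀ t, x (t + 1) = x t + a t - min (s t) (x t)) (t : ℕ) :
    ∑ k ∈ range t, a k - ∑ k ∈ range t, s k ≤ x t := by
  induction t with
  | zero => simp [hx0]
  | succ t ih =>
    rw [hrec, sum_range_succ, sum_range_succ]
    linarith [min_le_left (s t) (x t)]

section WeightedWorkload

variable {ι κ : Type*} [Fintype ι] [Finite κ] {A : ℕ → ι → ℝ} {S : κ → ι → ℝ} {σ : ℕ → κ}
  {X : ℕ → ι → ℝ} {w : ι → ℝ}

theorem sum_weighted_arrivals_le (hw : ∀ q, 0 ≤ w q)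
    (hX : ∀ t q, ∑ k ∈ range t, A k q - ∑ k ∈ range t, S (σ k) q ≤ X t q) (t : ℕ) :
    ∑ q, (∑ k ∈ range t, A k q) * w q ≤ ∑ q, X t q * w q + t * ⨆ j, ∑ q, S j q * w q := by
  have hbdd : BddAbove (Set.range fun j => ∑ q, S j q * w q) := (Set.finite_range _).bddAbove
  calc ∑ q, (∑ k ∈ range t, A k q) * w q
      ≤ ∑ q, (X t q + ∑ k ∈ range t, S (σ k) q) * w q :=
        sum_le_sum fun q _ => mul_le_mul_of_nonneg_right (by linarith [hX t q]) (hw q)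
    _ = ∑ q, X t q * w q + ∑ k ∈ range t, ∑ q, S (σ k) q * w q := by
        simp_rw [add_mul, sum_add_distrib, sum_mul]
        rw [sum_comm]
    _ ≤ ∑ q, X t q * w q + ∑ k ∈ range t, ⨆ j, ∑ q, S j q * w q := by
        gcongr with k
        exact le_ciSup hbdd (σ k)
    _ = ∑ q, X t q * w q + t * ⨆ j, ∑ q, S j q * w q := by simp

theorem sum_weighted_average_arrivals_le (hw : ∀ q, 0 ≤ w q)
    (hX : ∀ t q, ∑ k ∈ range t, A k q - ∑ k ∈ range t, S (σ k) q ≤ X t q) {t : ℕ}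
    (ht : 0 < t) :
    ∑ q, (∑ k ∈ range t, A k q) / t * w q ≤
      ∑ q, X t q / t * w q + ⨆ j, ∑ q, S j q * w q := by
  have ht' : (0 : ℝ) < t := by exact_mod_cast ht
  simp_rw [div_mul_eq_mul_div, ← sum_div]
  rw [div_add' _ _ _ ht'.ne', div_le_div_iff_of_pos_right ht', mul_comm _ (t : ℝ)]
  exact sum_weighted_arrivals_le hw hX t

theorem sum_rate_mul_le {ρ η : ι → ℝ} {tc : ℕ → ℕ} (hw : ∀ q, 0 ≤ w q)
    (hX : ∀ t q, ∑ k ∈ range t, A k q - ∑ k ∈ range t, S (σ k) q ≤ X t q)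
    (hρ : ∀ q, Tendsto (fun t : ℕ => (∑ k ∈ range t, A k q) / (t : ℝ)) atTop (𝓝 (ρ q)))
    (htc : Tendsto tc atTop atTop)
    (hη : Tendsto (fun c => fun q => X (tc c) q / (tc c : ℝ)) atTop (𝓝 η)) :
    ∑ q, ρ q * w q ≤ ∑ q, η q * w q + ⨆ j, ∑ q, S j q * w q := by
  refine le_of_tendsto_of_tendsto ?_ ?_
    ((htc.eventually_gt_atTop 0).mono fun c hc => sum_weighted_average_arrivals_le hw hX hc)
  · exact tendsto_finsetSum _ fun q _ => ((hρ q).comp htc).mul_const (w q)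
  · exact (tendsto_finsetSum _ fun q _ => (tendsto_pi_nhds.1 hη q).mul_const (w q)).add_const _

end WeightedWorkload

theorem le_neg_sub_mul_add_mul_one_div {P M V ε : ℝ} (h : P ≤ V + M) (hε : ε ∈ Set.Ioo 0 1) :
    V ≤ -(P - M) * (ε / (1 - ε)) + V * (1 / (1 - ε)) := by
  obtain ⟨hε0, hε1⟩ := hε
  have h1 : 0 < 1 - ε := by linarith
  rw [show -(P - M) * (ε / (1 - ε)) + V * (1 / (1 - ε)) = ((M - P) * ε + V) / (1 - ε) by
    field_simp; ring, le_div_iff₀ h1]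
  nlinarith

theorem stmt6_general {Q N : ℕ}
    (A : ℕ → Fin Q → ℝ)
    (ρ : Fin Q → ℝ)
    (hρ : ∀ q, Tendsto (fun t : ℕ => (∑ s ∈ Finset.range t, A s q) / (t : ℝ))
      atTop (𝓝 (ρ q)))
    (S : Fin N → Fin Q → ℝ)
    (σ : ℕ → Fin N)
    (X : ℕ → Fin Q → ℝ) (hX0 : ∀ q, X 0 q = 0)
    (hXrec : ∀ t q, X (t + 1) q = X t q + A t q - min (S (σ t) q) (X t q))
    (d : Fin Q → ℝ) (hd : ∀ q, 0 < d q)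
    (η : Fin Q → ℝ) (hη : ∀ q, 0 ≤ η q)
    (tc : ℕ → ℕ) (htc : StrictMono tc)
    (hηlim : Tendsto (fun c => fun q => X (tc c) q / (tc c : ℝ)) atTop (𝓝 η)) :
    ∀ ε : ℝ, ε ∈ Set.Ioo (0 : ℝ) 1 →
      ∑ q, η q * (d q * η q) ≤
        -((∑ q, ρ q * (d q * η q)) - (⨆ j, ∑ q, S j q * (d q * η q))) * (ε / (1 - ε))
          + (∑ q, η q * (d q * η q)) * (1 / (1 - ε)) := by
  intro ε hε
  have hworkload : ∀ t q, ∑ k ∈ range t, A k q - ∑ k ∈ range t, S (σ k) q ≤ X t q :=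
    fun t q => sum_arrivals_sub_sum_service_le_workload (x := (X · q)) (hX0 q) (hXrec · q) t
  exact le_neg_sub_mul_add_mul_one_div (sum_rate_mul_le (fun q => mul_nonneg (hd q).le (hη q))
    hworkload hρ htc.tendsto_atTop hηlim) hε

/-- for every ε ∈ (0,1),
−[⟨ρ,Dη⟩ − max_S ⟨S,Dη⟩]·ε/(1−ε) + ⟨η,Dη⟩/(1−ε) ≥ ⟨η,Dη⟩. -/
theorem stmt6 {Q N : ℕ} (hQ : 0 < Q) (hN : 0 < N)
    (A : ℕ → Fin Q → ℝ) (Abar : Fin Q → ℝ)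
    (hA0 : ∀ t q, 0 ≤ A t q) (hAbar : ∀ t q, A t q ≤ Abar q)
    (ρ : Fin Q → ℝ) (hρpos : ∀ q, 0 < ρ q)
    (hρ : ∀ q, Tendsto (fun t : ℕ => (∑ s ∈ Finset.range t, A s q) / (t : ℝ))
      atTop (𝓝 (ρ q)))
    (S : Fin N → Fin Q → ℝ) (hS : ∀ i q, 0 ≤ S i q)
    (σ : ℕ → Fin N)
    (X : ℕ → Fin Q → ℝ) (hX0 : ∀ q, X 0 q = 0)
    (hXrec : ∀ t q, X (t + 1) q = X t q + A t q - min (S (σ t) q) (X t q))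
    (d : Fin Q → ℝ) (hd : ∀ q, 0 < d q)
    (η : Fin Q → ℝ) (hη : ∀ q, 0 ≤ η q)
    (tc : ℕ → ℕ) (htc : StrictMono tc)
    (hηlim : Tendsto (fun c => fun q => X (tc c) q / (tc c : ℝ)) atTop (𝓝 η))
    (hηlimsup : ∑ q, η q * (d q * η q) =
      limsup (fun t : ℕ => ∑ q, (X t q / (t : ℝ)) * (d q * (X t q / (t : ℝ)))) atTop) :
    ∀ ε : ℝ, ε ∈ Set.Ioo (0 : ℝ) 1 →
      ∑ q, η q * (d q * η q) ≤
        -((∑ q, ρ q * (d q * η q)) - (⨆ j, ∑ q, S j q * (d q * η q))) * (ε / (1 - ε))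
          + (∑ q, η q * (d q * η q)) * (1 / (1 - ε)) :=
  stmt6_general A ρ hρ S σ X hX0 hXrec d hd η hη tc htc hηlim
end

section
/- Suppose the system is operated under the MaxWeight policy with weight matrix D and ρ ∉ 𝒫. Let {t_c} be an increasing unbounded sequence with lim_{c→∞} X(t_c)/t_c = η, where ⟨η, D·η⟩ = limsup_{t→∞} ⟨X(t)/t, D·(X(t)/t)⟩. Then there is no increasing unbounded sequence {t_a} with lim_{a→∞} X(t_a)/t_a = ψ for some ψ ≠ η; consequently lim_{t→∞} X(t)/t = η. -/
/-!
Write `B(x, y) = x ⬝ᵥ (d * y)`, `b = B(η, η)`, `r = B(η, ρ)` and `m = max_j B(η, S_j)`.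
Conservation of work gives `B(η, X t) = B(η, ∑_{s<t} A s) - m t + R t`, where the cumulative
service shortfall `R t = ∑_{s<t} (m - B(η, departures at s))` is nonnegative and nondecreasing;
hence every subsequential limit `ψ` of `X(t)/t` satisfies `B(η, ψ) ≥ r - m`.

Conversely, `R(t)/t` is asymptotically at most `b - r + m` (this is where `b` being the limsup of
`B(X(t)/t, X(t)/t)` enters), and it attains this value along `t_c`. Just before `t_c` the state
`X(u)/u` stays close to `η`, where a MaxWeight decision is nearly optimal in the direction `η`,
so `R` hardly grows there. Both facts together force `b ≤ r - m`. Then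
`B(ψ - η, ψ - η) = B(ψ, ψ) - 2 B(η, ψ) + b ≤ b - 2b + b = 0`, so `ψ = η`, and compactness of the
bounded set of scaled states turns uniqueness of subsequential limits into convergence.
-/

open Finset Filter Topology

theorem sub_le_mul_of_succ_sub_le {f : ℕ → ℝ} {c : ℝ} {a b : ℕ} (hab : a ≤ b)
    (h : ∀ u, a ≤ u → u < b → f (u + 1) - f u ≤ c) : f b - f a ≤ (b - a) * c := by
  induction b, hab using Nat.le_induction with
  | base => simp
  | succ b hab ih =>
    have := h b hab b.lt_succ_self
    have := ih fun u hau hub => h u hau (hub.trans b.lt_succ_self)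
    push_cast
    linarith

theorem abs_div_sub_div_le {f : ℕ → ℝ} {a L : ℝ} (hf : ∀ n, |f n| ≤ a * n)
    (hL : ∀ n, |f (n + 1) - f n| ≤ L) {u t : ℕ} (hu : 0 < u) (hut : u ≤ t) :
    |f u / u - f t / t| ≤ (a + L) * (t - u) / t := by
  have hu' : (0 : ℝ) < u := by exact_mod_cast hu
  have ht : (0 : ℝ) < t := hu'.trans_le (by exact_mod_cast hut)
  have hgap : (0 : ℝ) ≤ t - u := sub_nonneg.2 (by exact_mod_cast hut)
  have hLip : |f u - f t| ≤ L * (t - u) := by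
    have h := sub_le_mul_of_succ_sub_le (f := fun n => |f n - f u|) (c := L) hut
      fun n _ _ => (abs_sub_abs_le_abs_sub _ _).trans (by simpa using hL n)
    simpa [abs_sub_comm, mul_comm] using h
  have hsplit : f u / u - f t / t = (f u / u * (t - u) + (f u - f t)) / t := by
    field_simp; ring
  have hfu : |f u / u| * (t - u) ≤ a * (t - u) := by
    gcongr; rw [abs_div, abs_of_pos hu', div_le_iff₀ hu']; exact hf u
  rw [hsplit, abs_div, abs_of_pos ht]
  gcongr
  calc |f u / u * (t - u) + (f u - f t)| ≤ |f u / u| * (t - u) + |f u - f t| := by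
        simpa [abs_mul, abs_of_nonneg hgap] using abs_add_le (f u / u * (t - u)) (f u - f t)
    _ ≤ (a + L) * (t - u) := by linarith

theorem le_mul_of_window_increment_le {R : ℕ → ℝ} {τ : ℕ → ℕ} {κ K δ : ℝ}
    (hK : 0 ≤ K) (hδ : 0 < δ) (hδ1 : δ < 1) (hτ : Tendsto τ atTop atTop)
    (hlim : Tendsto (fun c => R (τ c) / τ c) atTop (𝓝 κ))
    (hup : ∀ᶠ t in atTop, R t ≤ (κ + δ ^ 2) * t)
    (hwin : ∀ᶠ c in atTop, ∀ u, u < τ c → (τ c : ℝ) - u ≤ δ * τ c → R (u + 1) - R u ≤ K * δ) :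
    κ ≤ (1 + K) * δ := by
  -- Over the window `[t₀ c, τ c]` the increment of `R` is about `κ δ τ c` by `hlim` and `hup`,
  -- but at most `K δ² τ c` by `hwin`.
  set t₀ : ℕ → ℕ := fun c => ⌈(1 - δ) * τ c⌉₊
  have hτR : Tendsto (fun c => (τ c : ℝ)) atTop atTop := tendsto_natCast_atTop_atTop.comp hτ
  have hθ : Tendsto (fun c => (t₀ c : ℝ) / τ c) atTop (𝓝 (1 - δ)) :=
    (tendsto_nat_ceil_mul_div_atTop (by linarith)).comp hτR
  have ht₀low : ∀ c, (1 - δ) * τ c ≤ t₀ c := fun c => Nat.le_ceil _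
  have ht₀τ : ∀ c, t₀ c ≤ τ c := fun c => Nat.ceil_le.2 (by nlinarith [(τ c).cast_nonneg (α := ℝ)])
  have ht₀ : Tendsto t₀ atTop atTop := tendsto_natCast_atTop_iff.1 <|
    tendsto_atTop_mono ht₀low (hτR.const_mul_atTop (by linarith))
  have hbound : ∀ᶠ c in atTop,
      R (τ c) / τ c ≤ (κ + δ ^ 2) * ((t₀ c : ℝ) / τ c) + K * δ ^ 2 := by
    filter_upwards [hwin, ht₀.eventually hup, hτ.eventually_gt_atTop 0] with c hw hR₀ hτ0
    have hτ0' : (0 : ℝ) < τ c := by exact_mod_cast hτ0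
    have hgap : (τ c : ℝ) - t₀ c ≤ δ * τ c := by linarith [ht₀low c]
    have hinc := sub_le_mul_of_succ_sub_le (ht₀τ c) fun u hu hut =>
      hw u hut (by linarith [(Nat.cast_le (α := ℝ)).2 hu])
    have : ((τ c : ℝ) - t₀ c) * (K * δ) ≤ δ * τ c * (K * δ) :=
      mul_le_mul_of_nonneg_right hgap (by positivity)
    rw [div_le_iff₀ hτ0']
    field_simp
    nlinarith
  have hκ : κ ≤ (κ + δ ^ 2) * (1 - δ) + K * δ ^ 2 :=
    le_of_tendsto_of_tendsto hlim ((hθ.const_mul _).add_const _) hbound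
  have : δ * κ ≤ δ * ((1 + K) * δ) := by nlinarith
  exact le_of_mul_le_mul_left this hδ

theorem nonpos_of_window_increment_le {R : ℕ → ℝ} {τ : ℕ → ℕ} {κ K : ℝ} (hK : 0 ≤ K)
    (hτ : Tendsto τ atTop atTop) (hlim : Tendsto (fun c => R (τ c) / τ c) atTop (𝓝 κ))
    (hup : ∀ ε > 0, ∀ᶠ t in atTop, R t ≤ (κ + ε) * t)
    (hwin : ∀ δ > 0, δ < 1 → ∀ᶠ c in atTop,
      ∀ u, u < τ c → (τ c : ℝ) - u ≤ δ * τ c → R (u + 1) - R u ≤ K * δ) :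
    κ ≤ 0 := by
  refine le_of_forall_pos_le_add fun ε hε => ?_
  set δ := min (1 / 2) (ε / (1 + K))
  have hδ : 0 < δ := lt_min (by norm_num) (by positivity)
  have hδ1 : δ < 1 := by linarith [min_le_left (1 / 2 : ℝ) (ε / (1 + K))]
  have hδε : (1 + K) * δ ≤ ε := by
    have := min_le_right (1 / 2) (ε / (1 + K))
    rwa [le_div_iff₀ (by linarith), mul_comm] at this
  have := le_mul_of_window_increment_le hK hδ hδ1 hτ hlim (hup _ (by positivity))
    (hwin δ hδ hδ1)
  linarith

theorem IsCompact.tendsto_of_forall_subseq_eq {Y : Type*} [TopologicalSpace Y]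
    [FirstCountableTopology Y] {K : Set Y} (hK : IsCompact K) {f : ℕ → Y} (hf : ∀ n, f n ∈ K)
    {y : Y} (h : ∀ φ : ℕ → ℕ, ∀ z, StrictMono φ → Tendsto (f ∘ φ) atTop (𝓝 z) → z = y) :
    Tendsto f atTop (𝓝 y) :=
  hK.tendsto_nhds_of_unique_mapClusterPt (Eventually.of_forall hf) fun z _ hz => by
    obtain ⟨φ, hφ, hlim⟩ := hz.tendsto_subseq
    exact h φ z hφ hlim

section WeightedForm

variable {ι : Type*} [Fintype ι] {d : ι → ℝ}

theorem dotProduct_mul_add_sub_two_mul (d x y : ι → ℝ) :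
    x ⬝ᵥ (d * x) + y ⬝ᵥ (d * y) - 2 * (y ⬝ᵥ (d * x)) = ∑ i, d i * (x i - y i) ^ 2 := by
  simp only [dotProduct, Pi.mul_apply, mul_sum, ← sum_add_distrib, ← sum_sub_distrib]
  exact sum_congr rfl fun i _ => by ring

theorem two_mul_dotProduct_mul_le (hd : ∀ i, 0 ≤ d i) (x y : ι → ℝ) :
    2 * (y ⬝ᵥ (d * x)) ≤ x ⬝ᵥ (d * x) + y ⬝ᵥ (d * y) := by
  have := dotProduct_mul_add_sub_two_mul d x y
  have : 0 ≤ ∑ i, d i * (x i - y i) ^ 2 := sum_nonneg fun i _ => by have := hd i; positivity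
  linarith

theorem eq_of_add_le_two_mul_dotProduct {x y : ι → ℝ} (hd : ∀ i, 0 < d i)
    (h : x ⬝ᵥ (d * x) + y ⬝ᵥ (d * y) ≤ 2 * (y ⬝ᵥ (d * x))) : x = y := by
  have hsum : ∑ i, d i * (x i - y i) ^ 2 = 0 :=
    le_antisymm (by linarith [dotProduct_mul_add_sub_two_mul d x y])
      (sum_nonneg fun i _ => by have := hd i; positivity)
  funext i
  have := (sum_eq_zero_iff_of_nonneg fun i _ => by have := hd i; positivity).1 hsum i (mem_univ i)
  simpa [(hd i).ne', sub_eq_zero] using this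

end WeightedForm

theorem mul_sub_mul_min_le {η s s' X M u e : ℝ} (hs : 0 ≤ s) (hsM : s ≤ M) (hs' : 0 ≤ s')
    (hs'M : s' ≤ M) (hX : 0 ≤ X) (hu : 0 < u) (he : |X / u - η| ≤ e) :
    η * s' - η * min s X ≤ X / u * (s' - s) + (2 * M * e + M ^ 2 / u) := by
  have hmin : 0 ≤ s - min s X ∧ s - min s X ≤ M :=
    ⟨by linarith [min_le_left s X], by linarith [le_min hs hX]⟩
  have hblock : X * (s - min s X) ≤ M ^ 2 := by
    rcases le_total s X with h | h
    · simp [min_eq_left h]; positivity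
    · rw [min_eq_right h]; nlinarith
  have he0 : 0 ≤ e := (abs_nonneg _).trans he
  have hη : (η - X / u) * (s' - s) ≤ e * M := by
    have : |s' - s| ≤ M := abs_sub_le_iff.2 ⟨by linarith, by linarith⟩
    calc (η - X / u) * (s' - s) ≤ |η - X / u| * |s' - s| := by rw [← abs_mul]; exact le_abs_self _
      _ ≤ e * M := by rw [abs_sub_comm]; gcongr
  have hηX : η * (s - min s X) ≤ (X / u + e) * (s - min s X) :=
    mul_le_mul_of_nonneg_right (by linarith [(abs_le.1 he).1]) hmin.1
  have he' : e * (s - min s X) ≤ e * M := mul_le_mul_of_nonneg_left hmin.2 he0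
  have hXu : X / u * (s - min s X) ≤ M ^ 2 / u := by
    rw [div_mul_eq_mul_div]; gcongr
  nlinarith

/-- A MaxWeight decision at a state close to the ray through `η` is nearly optimal in the
direction `η`. -/
theorem dotProduct_sub_dotProduct_min_le {ι : Type*} [Fintype ι] {d η s s' X : ι → ℝ} {M u : ℝ}
    (hd : ∀ i, 0 ≤ d i) (hs : ∀ i, 0 ≤ s i) (hsM : ∀ i, s i ≤ M) (hs' : ∀ i, 0 ≤ s' i)
    (hs'M : ∀ i, s' i ≤ M) (hX : ∀ i, 0 ≤ X i) (hu : 0 < u)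
    (hmw : s' ⬝ᵥ (d * X) ≤ s ⬝ᵥ (d * X)) :
    η ⬝ᵥ (d * s') - η ⬝ᵥ (d * fun i => min (s i) (X i))
      ≤ (∑ i, d i) * (2 * M * ‖(fun i => X i / u) - η‖ + M ^ 2 / u) := by
  have hcoord : ∀ i, d i * (η i * s' i - η i * min (s i) (X i))
      ≤ (s' i * (d i * X i) - s i * (d i * X i)) / u
        + d i * (2 * M * ‖(fun i => X i / u) - η‖ + M ^ 2 / u) := by
    intro i
    have he : |X i / u - η i| ≤ ‖(fun i => X i / u) - η‖ := by
      simpa using norm_le_pi_norm ((fun i => X i / u) - η) i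
    have := mul_le_mul_of_nonneg_left
      (mul_sub_mul_min_le (hs i) (hsM i) (hs' i) (hs'M i) (hX i) hu he) (hd i)
    calc _ ≤ _ := this
      _ = _ := by field_simp
  have hsum := sum_le_sum fun i (_ : i ∈ univ) => hcoord i
  rw [sum_add_distrib, ← sum_div, sum_sub_distrib, ← sum_mul] at hsum
  have : ((s' ⬝ᵥ (d * X)) - s ⬝ᵥ (d * X)) / u ≤ 0 :=
    div_nonpos_of_nonpos_of_nonneg (by linarith) hu.le
  simp only [dotProduct, Pi.mul_apply] at this ⊢
  calc _ = ∑ i, d i * (η i * s' i - η i * min (s i) (X i)) := by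
        rw [← sum_sub_distrib]; exact sum_congr rfl fun i _ => by ring
    _ ≤ _ := by linarith

section MaxWeight

variable {ι J : Type*} {A : ℕ → ι → ℝ} {S : J → ι → ℝ} {σ : ℕ → J}
  {X : ℕ → ι → ℝ} {d η : ι → ℝ} {M m : ℝ}

noncomputable def fluidScale (X : ℕ → ι → ℝ) (t : ℕ) : ι → ℝ := fun q => X t q / t

def shortfall [Fintype ι] (S : J → ι → ℝ) (σ : ℕ → J) (X : ℕ → ι → ℝ) (d η : ι → ℝ) (m : ℝ)
    (t : ℕ) : ℝ :=
  ∑ s ∈ range t, (m - η ⬝ᵥ (d * fun q => min (S (σ s) q) (X s q)))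

theorem workload_nonneg_s8 (hX0 : ∀ q, X 0 q = 0) (hA0 : ∀ t q, 0 ≤ A t q)
    (hXrec : ∀ t q, X (t + 1) q = X t q + A t q - min (S (σ t) q) (X t q)) (t : ℕ) (q : ι) :
    0 ≤ X t q := by
  induction t with
  | zero => exact (hX0 q).ge
  | succ t ih => rw [hXrec]; linarith [min_le_right (S (σ t) q) (X t q), hA0 t q]

theorem workload_le_mul (hX0 : ∀ q, X 0 q = 0) (hA0 : ∀ t q, 0 ≤ A t q)
    (hAM : ∀ t q, A t q ≤ M) (hS : ∀ j q, 0 ≤ S j q)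
    (hXrec : ∀ t q, X (t + 1) q = X t q + A t q - min (S (σ t) q) (X t q)) (t : ℕ) (q : ι) :
    X t q ≤ M * t := by
  induction t with
  | zero => simp [hX0]
  | succ t ih =>
    rw [hXrec]; push_cast
    linarith [le_min (hS (σ t) q) (workload_nonneg_s8 hX0 hA0 hXrec t q), hAM t q]

theorem abs_workload_succ_sub_le (hX0 : ∀ q, X 0 q = 0) (hA0 : ∀ t q, 0 ≤ A t q)
    (hAM : ∀ t q, A t q ≤ M) (hS : ∀ j q, 0 ≤ S j q) (hSM : ∀ j q, S j q ≤ M)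
    (hXrec : ∀ t q, X (t + 1) q = X t q + A t q - min (S (σ t) q) (X t q)) (t : ℕ) (q : ι) :
    |X (t + 1) q - X t q| ≤ M := by
  have := le_min (hS (σ t) q) (workload_nonneg_s8 hX0 hA0 hXrec t q)
  rw [hXrec, abs_le]
  constructor <;> linarith [min_le_left (S (σ t) q) (X t q), hA0 t q, hAM t q, hSM (σ t) q]

theorem fluidScale_mem_Icc (hX0 : ∀ q, X 0 q = 0) (hA0 : ∀ t q, 0 ≤ A t q)
    (hAM : ∀ t q, A t q ≤ M) (hS : ∀ j q, 0 ≤ S j q) (hM : 0 ≤ M)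
    (hXrec : ∀ t q, X (t + 1) q = X t q + A t q - min (S (σ t) q) (X t q)) (t : ℕ) (q : ι) :
    fluidScale X t q ∈ Set.Icc 0 M := by
  refine ⟨div_nonneg (workload_nonneg_s8 hX0 hA0 hXrec t q) t.cast_nonneg, ?_⟩
  rcases t.eq_zero_or_pos with rfl | ht
  · simpa [fluidScale] using hM
  · exact div_le_of_le_mul₀ t.cast_nonneg hM (workload_le_mul hX0 hA0 hAM hS hXrec t q)

theorem norm_fluidScale_sub_le [Fintype ι] (hX0 : ∀ q, X 0 q = 0) (hA0 : ∀ t q, 0 ≤ A t q)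
    (hAM : ∀ t q, A t q ≤ M) (hS : ∀ j q, 0 ≤ S j q) (hSM : ∀ j q, S j q ≤ M) (hM : 0 ≤ M)
    (hXrec : ∀ t q, X (t + 1) q = X t q + A t q - min (S (σ t) q) (X t q))
    {u t : ℕ} (hu : 0 < u) (hut : u ≤ t) :
    ‖fluidScale X u - fluidScale X t‖ ≤ 2 * M * (t - u) / t := by
  have hgap : (0 : ℝ) ≤ t - u := sub_nonneg.2 (by exact_mod_cast hut)
  refine (pi_norm_le_iff_of_nonneg (by positivity)).2 fun q => ?_
  have hX : ∀ n, |X n q| ≤ M * n := fun n => by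
    rw [abs_of_nonneg (workload_nonneg_s8 hX0 hA0 hXrec n q)]
    exact workload_le_mul hX0 hA0 hAM hS hXrec n q
  simpa [fluidScale, two_mul] using
    abs_div_sub_div_le hX (abs_workload_succ_sub_le hX0 hA0 hAM hS hSM hXrec · q) hu hut

theorem isBoundedUnder_le_dotProduct_fluidScale [Fintype ι] (hX0 : ∀ q, X 0 q = 0)
    (hA0 : ∀ t q, 0 ≤ A t q) (hAM : ∀ t q, A t q ≤ M) (hS : ∀ j q, 0 ≤ S j q) (hM : 0 ≤ M)
    (hd : ∀ q, 0 ≤ d q)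
    (hXrec : ∀ t q, X (t + 1) q = X t q + A t q - min (S (σ t) q) (X t q)) :
    IsBoundedUnder (· ≤ ·) atTop fun t => fluidScale X t ⬝ᵥ (d * fluidScale X t) := by
  refine isBoundedUnder_of ⟨∑ q, M * (d q * M), fun t => sum_le_sum fun q _ => ?_⟩
  obtain ⟨h0, h1⟩ := fluidScale_mem_Icc hX0 hA0 hAM hS hM hXrec t q
  have := hd q
  simp only [Pi.mul_apply]
  gcongr

theorem dotProduct_mul_fluidScale [Fintype ι] (d η : ι → ℝ) (Y : ℕ → ι → ℝ) (t : ℕ) :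
    η ⬝ᵥ (d * fluidScale Y t) = η ⬝ᵥ (d * Y t) / t := by
  simp only [dotProduct, Pi.mul_apply, fluidScale, sum_div]
  exact sum_congr rfl fun q _ => by ring

theorem dotProduct_workload_eq [Fintype ι] (hX0 : ∀ q, X 0 q = 0)
    (hXrec : ∀ t q, X (t + 1) q = X t q + A t q - min (S (σ t) q) (X t q)) (t : ℕ) :
    η ⬝ᵥ (d * X t) = η ⬝ᵥ (d * ∑ s ∈ range t, A s) - m * t + shortfall S σ X d η m t := by
  induction t with
  | zero => simp [shortfall, show X 0 = 0 from funext hX0]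
  | succ t ih =>
    have hstep : X (t + 1) = X t + A t - fun q => min (S (σ t) q) (X t q) := funext (hXrec t)
    have hR : shortfall S σ X d η m (t + 1) = shortfall S σ X d η m t
        + (m - η ⬝ᵥ (d * fun q => min (S (σ t) q) (X t q))) := sum_range_succ _ _
    rw [hR, sum_range_succ, hstep]
    simp only [mul_add, mul_sub, dotProduct_add, dotProduct_sub, ih]
    push_cast
    ring

theorem dotProduct_fluidScale_eq [Fintype ι] (hX0 : ∀ q, X 0 q = 0)
    (hXrec : ∀ t q, X (t + 1) q = X t q + A t q - min (S (σ t) q) (X t q)) {t : ℕ} (ht : 0 < t) :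
    η ⬝ᵥ (d * fluidScale X t) = η ⬝ᵥ (d * fluidScale (fun t => ∑ s ∈ range t, A s) t) - m
      + shortfall S σ X d η m t / t := by
  rw [dotProduct_mul_fluidScale, dotProduct_mul_fluidScale,
    dotProduct_workload_eq (m := m) hX0 hXrec]
  field_simp

theorem shortfall_nonneg [Fintype ι] (hd : ∀ q, 0 ≤ d q) (hη : ∀ q, 0 ≤ η q)
    (hm : ∀ j, η ⬝ᵥ (d * S j) ≤ m) (t : ℕ) : 0 ≤ shortfall S σ X d η m t := by
  refine sum_nonneg fun s _ => sub_nonneg.2 <| le_trans ?_ (hm (σ s))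
  refine sum_le_sum fun q _ => ?_
  have := hd q; have := hη q
  simp only [Pi.mul_apply]
  gcongr
  exact min_le_left _ _

theorem shortfall_succ_sub_le [Fintype ι] (hX0 : ∀ q, X 0 q = 0) (hA0 : ∀ t q, 0 ≤ A t q)
    (hAM : ∀ t q, A t q ≤ M) (hS : ∀ j q, 0 ≤ S j q) (hSM : ∀ j q, S j q ≤ M) (hM : 0 ≤ M)
    (hd : ∀ q, 0 ≤ d q)
    (hXrec : ∀ t q, X (t + 1) q = X t q + A t q - min (S (σ t) q) (X t q))
    (hMW : ∀ t j, S j ⬝ᵥ (d * X t) ≤ S (σ t) ⬝ᵥ (d * X t)) (j : J) {u t : ℕ} (hu : 0 < u)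
    (hut : u ≤ t) :
    shortfall S σ X d η (η ⬝ᵥ (d * S j)) (u + 1) - shortfall S σ X d η (η ⬝ᵥ (d * S j)) u
      ≤ (∑ q, d q) * (2 * M * (2 * M * (t - u) / t + ‖fluidScale X t - η‖) + M ^ 2 / u) := by
  rw [shortfall, sum_range_succ, ← shortfall, add_sub_cancel_left]
  refine (dotProduct_sub_dotProduct_min_le hd (hS (σ u)) (hSM (σ u)) (hS j) (hSM j)
    (workload_nonneg_s8 hX0 hA0 hXrec u) (u := u) (by exact_mod_cast hu) (hMW u j)).trans ?_
  have hnear : ‖fluidScale X u - η‖ ≤ 2 * M * (t - u) / t + ‖fluidScale X t - η‖ :=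
    (norm_sub_le_norm_sub_add_norm_sub _ (fluidScale X t) _).trans <|
      add_le_add_left (norm_fluidScale_sub_le hX0 hA0 hAM hS hSM hM hXrec hu hut) _
  have := sum_nonneg fun q (_ : q ∈ univ) => hd q
  gcongr
  exact hnear

theorem eventually_shortfall_succ_sub_le [Fintype ι] (hX0 : ∀ q, X 0 q = 0)
    (hA0 : ∀ t q, 0 ≤ A t q) (hAM : ∀ t q, A t q ≤ M) (hS : ∀ j q, 0 ≤ S j q)
    (hSM : ∀ j q, S j q ≤ M) (hM : 0 ≤ M) (hd : ∀ q, 0 ≤ d q)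
    (hXrec : ∀ t q, X (t + 1) q = X t q + A t q - min (S (σ t) q) (X t q))
    (hMW : ∀ t j, S j ⬝ᵥ (d * X t) ≤ S (σ t) ⬝ᵥ (d * X t)) {τ : ℕ → ℕ}
    (hτ : Tendsto τ atTop atTop) (hηlim : Tendsto (fun c => fluidScale X (τ c)) atTop (𝓝 η))
    (j : J) {δ : ℝ} (hδ : 0 < δ) (hδ1 : δ < 1) :
    ∀ᶠ c in atTop, ∀ u, u < τ c → (τ c : ℝ) - u ≤ δ * τ c →
      shortfall S σ X d η (η ⬝ᵥ (d * S j)) (u + 1) - shortfall S σ X d η (η ⬝ᵥ (d * S j)) u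
        ≤ (∑ q, d q) * (2 * M * (2 * M + 1) + 1) * δ := by
  have hτR : Tendsto (fun c => (τ c : ℝ)) atTop atTop := tendsto_natCast_atTop_atTop.comp hτ
  filter_upwards [(tendsto_iff_norm_sub_tendsto_zero.1 hηlim).eventually (eventually_le_nhds hδ),
    (hτR.const_mul_atTop (sub_pos.2 hδ1)).eventually_ge_atTop (max 1 (M ^ 2 / δ))]
    with c hnear hlarge u hu hgap
  have hu1 : max 1 (M ^ 2 / δ) ≤ u := by linarith
  have hu0 : (0 : ℝ) < u := by linarith [le_max_left 1 (M ^ 2 / δ)]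
  have hτ0 : (0 : ℝ) < τ c := hu0.trans (by exact_mod_cast hu)
  refine (shortfall_succ_sub_le hX0 hA0 hAM hS hSM hM hd hXrec hMW j
    (by exact_mod_cast hu0) hu.le).trans ?_
  have hdrift : 2 * M * (τ c - u) / τ c ≤ 2 * M * δ := by
    rw [mul_div_assoc]; gcongr; rwa [div_le_iff₀ hτ0]
  have hblock : M ^ 2 / u ≤ δ := by
    rw [div_le_iff₀ hu0, ← div_le_iff₀' hδ]; exact (le_max_right _ _).trans hu1
  have := sum_nonneg fun q (_ : q ∈ univ) => hd q
  calc _ ≤ (∑ q, d q) * (2 * M * (2 * M * δ + δ) + δ) := by gcongr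
    _ = _ := by ring

theorem dotProduct_self_le_of_maxWeight [Fintype ι] (hX0 : ∀ q, X 0 q = 0)
    (hA0 : ∀ t q, 0 ≤ A t q) (hAM : ∀ t q, A t q ≤ M) (hS : ∀ j q, 0 ≤ S j q)
    (hSM : ∀ j q, S j q ≤ M) (hM : 0 ≤ M) (hd : ∀ q, 0 ≤ d q)
    (hXrec : ∀ t q, X (t + 1) q = X t q + A t q - min (S (σ t) q) (X t q))
    (hMW : ∀ t j, S j ⬝ᵥ (d * X t) ≤ S (σ t) ⬝ᵥ (d * X t)) {ρ : ι → ℝ}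
    (hρ : Tendsto (fluidScale fun t => ∑ s ∈ range t, A s) atTop (𝓝 ρ)) {τ : ℕ → ℕ}
    (hτ : Tendsto τ atTop atTop) (hηlim : Tendsto (fun c => fluidScale X (τ c)) atTop (𝓝 η))
    (hηlimsup : η ⬝ᵥ (d * η) = limsup (fun t => fluidScale X t ⬝ᵥ (d * fluidScale X t)) atTop)
    (j : J) :
    η ⬝ᵥ (d * η) ≤ η ⬝ᵥ (d * ρ) - η ⬝ᵥ (d * S j) := by
  set m := η ⬝ᵥ (d * S j)
  set a := fluidScale fun t => ∑ s ∈ range t, A s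
  have hcont : Continuous fun v : ι → ℝ => η ⬝ᵥ (d * v) := by fun_prop
  have hr : Tendsto (fun t => η ⬝ᵥ (d * a t)) atTop (𝓝 (η ⬝ᵥ (d * ρ))) :=
    (hcont.tendsto ρ).comp hρ
  have hR : ∀ t, 0 < t → shortfall S σ X d η m t / t
      = η ⬝ᵥ (d * fluidScale X t) - η ⬝ᵥ (d * a t) + m := fun t ht => by
    rw [dotProduct_fluidScale_eq (m := m) hX0 hXrec ht]; ring
  suffices η ⬝ᵥ (d * η) - η ⬝ᵥ (d * ρ) + m ≤ 0 by linarith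
  refine nonpos_of_window_increment_le (R := shortfall S σ X d η m)
    (by have := sum_nonneg fun q (_ : q ∈ univ) => hd q; positivity) hτ ?_ ?_
    fun δ hδ hδ1 => eventually_shortfall_succ_sub_le hX0 hA0 hAM hS hSM hM hd hXrec hMW hτ
      hηlim j hδ hδ1
  · refine (((hcont.tendsto η).comp hηlim).sub (hr.comp hτ)).add_const m |>.congr' ?_
    filter_upwards [hτ.eventually_gt_atTop 0] with c hc
    exact (hR _ hc).symm
  · intro ε hε
    have hlt : limsup (fun t => fluidScale X t ⬝ᵥ (d * fluidScale X t)) atTop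
        < η ⬝ᵥ (d * η) + ε := by rw [← hηlimsup]; linarith
    filter_upwards [eventually_lt_of_limsup_lt hlt
        (isBoundedUnder_le_dotProduct_fluidScale hX0 hA0 hAM hS hM hd hXrec),
      hr.eventually (lt_mem_nhds (sub_lt_self _ (half_pos hε))), eventually_gt_atTop 0]
      with t hf hat ht
    have ht' : (0 : ℝ) < t := by exact_mod_cast ht
    have := two_mul_dotProduct_mul_le hd (fluidScale X t) η
    rw [← div_le_iff₀ ht', hR t ht]
    linarith

theorem eq_of_tendsto_fluidScale [Fintype ι] (hX0 : ∀ q, X 0 q = 0)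
    (hA0 : ∀ t q, 0 ≤ A t q) (hAM : ∀ t q, A t q ≤ M) (hS : ∀ j q, 0 ≤ S j q)
    (hSM : ∀ j q, S j q ≤ M) (hM : 0 ≤ M) (hd : ∀ q, 0 < d q)
    (hXrec : ∀ t q, X (t + 1) q = X t q + A t q - min (S (σ t) q) (X t q))
    (hMW : ∀ t j, S j ⬝ᵥ (d * X t) ≤ S (σ t) ⬝ᵥ (d * X t)) {ρ : ι → ℝ}
    (hρ : Tendsto (fluidScale fun t => ∑ s ∈ range t, A s) atTop (𝓝 ρ)) {τ : ℕ → ℕ}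
    (hτ : Tendsto τ atTop atTop) (hηlim : Tendsto (fun c => fluidScale X (τ c)) atTop (𝓝 η))
    (hηlimsup : η ⬝ᵥ (d * η) = limsup (fun t => fluidScale X t ⬝ᵥ (d * fluidScale X t)) atTop)
    {j : J} (hj : ∀ i, η ⬝ᵥ (d * S i) ≤ η ⬝ᵥ (d * S j)) {u : ℕ → ℕ} {ψ : ι → ℝ}
    (hu : Tendsto u atTop atTop) (hψ : Tendsto (fun a => fluidScale X (u a)) atTop (𝓝 ψ)) :
    ψ = η := by
  have hd' : ∀ q, 0 ≤ d q := fun q => (hd q).le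
  have hb := dotProduct_self_le_of_maxWeight hX0 hA0 hAM hS hSM hM hd' hXrec hMW hρ hτ hηlim
    hηlimsup j
  have hη : ∀ q, 0 ≤ η q := fun q => ge_of_tendsto' (((continuous_apply q).tendsto η).comp hηlim)
    fun c => (fluidScale_mem_Icc hX0 hA0 hAM hS hM hXrec (τ c) q).1
  have hψψ : ψ ⬝ᵥ (d * ψ) ≤ η ⬝ᵥ (d * η) := by
    have hcont : Continuous fun v : ι → ℝ => v ⬝ᵥ (d * v) := by fun_prop
    rw [hηlimsup]
    exact (MapClusterPt.of_comp hu ((hcont.tendsto ψ).comp hψ).mapClusterPt).le_limsup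
      (isBoundedUnder_le_dotProduct_fluidScale hX0 hA0 hAM hS hM hd' hXrec)
  have hηψ : η ⬝ᵥ (d * ρ) - η ⬝ᵥ (d * S j) ≤ η ⬝ᵥ (d * ψ) := by
    have hcont : Continuous fun v : ι → ℝ => η ⬝ᵥ (d * v) := by fun_prop
    refine le_of_tendsto_of_tendsto (((hcont.tendsto ρ).comp (hρ.comp hu)).sub_const _)
      ((hcont.tendsto ψ).comp hψ) ?_
    filter_upwards [hu.eventually_gt_atTop 0] with a ha
    have := shortfall_nonneg (σ := σ) (X := X) (t := u a) hd' hη hj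
    simp only [Function.comp_apply]
    rw [dotProduct_fluidScale_eq (m := η ⬝ᵥ (d * S j)) hX0 hXrec ha]
    have : 0 ≤ shortfall S σ X d η (η ⬝ᵥ (d * S j)) (u a) / u a := by positivity
    linarith
  exact eq_of_add_le_two_mul_dotProduct hd (by linarith)

end MaxWeight

theorem stmt8_general {Q N : ℕ}
    (A : ℕ → Fin Q → ℝ) (Abar : Fin Q → ℝ)
    (hA0 : ∀ t q, 0 ≤ A t q) (hAbar : ∀ t q, A t q ≤ Abar q)
    (ρ : Fin Q → ℝ)
    (hρ : ∀ q, Tendsto (fun t : ℕ => (∑ s ∈ Finset.range t, A s q) / (t : ℝ))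
      atTop (𝓝 (ρ q)))
    (S : Fin N → Fin Q → ℝ) (hS : ∀ i q, 0 ≤ S i q)
    (σ : ℕ → Fin N)
    (d : Fin Q → ℝ) (hd : ∀ q, 0 < d q)
    (X : ℕ → Fin Q → ℝ) (hX0 : ∀ q, X 0 q = 0)
    (hXrec : ∀ t q, X (t + 1) q = X t q + A t q - min (S (σ t) q) (X t q))
    (hMW : ∀ t j, ∑ q, S j q * (d q * X t q) ≤ ∑ q, S (σ t) q * (d q * X t q))
    (η : Fin Q → ℝ)
    (tc : ℕ → ℕ) (htc : StrictMono tc)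
    (hηlim : Tendsto (fun c => fun q => X (tc c) q / (tc c : ℝ)) atTop (𝓝 η))
    (hηlimsup : ∑ q, η q * (d q * η q) =
      limsup (fun t : ℕ => ∑ q, (X t q / (t : ℝ)) * (d q * (X t q / (t : ℝ)))) atTop) :
    (¬ ∃ (ta : ℕ → ℕ) (ψ : Fin Q → ℝ), StrictMono ta ∧
      Tendsto (fun a => fun q => X (ta a) q / (ta a : ℝ)) atTop (𝓝 ψ) ∧ ψ ≠ η) ∧
    Tendsto (fun t : ℕ => fun q => X t q / (t : ℝ)) atTop (𝓝 η) := by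
  set M := ‖Abar‖ + ∑ i, ‖S i‖
  have hM : 0 ≤ M := by positivity
  have hAM : ∀ t q, A t q ≤ M := fun t q => (hAbar t q).trans <| (Real.le_norm_self _).trans <|
    (norm_le_pi_norm Abar q).trans (le_add_of_nonneg_right (by positivity))
  have hSM : ∀ i q, S i q ≤ M := fun i q => (Real.le_norm_self _).trans <|
    (norm_le_pi_norm (S i) q).trans <|
      (single_le_sum (fun i _ => norm_nonneg (S i)) (mem_univ i)).trans
        (le_add_of_nonneg_left (norm_nonneg _))
  have hρ' : Tendsto (fluidScale fun t => ∑ s ∈ range t, A s) atTop (𝓝 ρ) :=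
    tendsto_pi_nhds.2 fun q => by simpa [fluidScale] using hρ q
  obtain ⟨j, -, hj⟩ := exists_max_image univ (fun j => η ⬝ᵥ (d * S j)) ⟨σ 0, mem_univ _⟩
  have hsub : ∀ (u : ℕ → ℕ) ψ, StrictMono u →
      Tendsto (fun a => fluidScale X (u a)) atTop (𝓝 ψ) → ψ = η := fun u ψ hu hψ =>
    eq_of_tendsto_fluidScale hX0 hA0 hAM hS hSM hM hd hXrec hMW hρ' htc.tendsto_atTop hηlim
      hηlimsup (fun i => hj i (mem_univ i)) hu.tendsto_atTop hψ
  refine ⟨fun ⟨u, ψ, hu, hψ, hne⟩ => hne (hsub u ψ hu hψ), ?_⟩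
  exact (isCompact_univ_pi fun _ => isCompact_Icc).tendsto_of_forall_subseq_eq
    (fun t q _ => fluidScale_mem_Icc hX0 hA0 hAM hS hM hXrec t q) hsub

/-- under MaxWeight in overload, there is no subsequential limit ψ ≠ η;
consequently X(t)/t → η. -/
theorem stmt8 {Q N : ℕ} (hQ : 0 < Q) (hN : 0 < N)
    (A : ℕ → Fin Q → ℝ) (Abar : Fin Q → ℝ)
    (hA0 : ∀ t q, 0 ≤ A t q) (hAbar : ∀ t q, A t q ≤ Abar q)
    (ρ : Fin Q → ℝ) (hρpos : ∀ q, 0 < ρ q)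
    (hρ : ∀ q, Tendsto (fun t : ℕ => (∑ s ∈ Finset.range t, A s q) / (t : ℝ))
      atTop (𝓝 (ρ q)))
    (S : Fin N → Fin Q → ℝ) (hS : ∀ i q, 0 ≤ S i q)
    (σ : ℕ → Fin N)
    (d : Fin Q → ℝ) (hd : ∀ q, 0 < d q)
    (X : ℕ → Fin Q → ℝ) (hX0 : ∀ q, X 0 q = 0)
    (hXrec : ∀ t q, X (t + 1) q = X t q + A t q - min (S (σ t) q) (X t q))
    (hMW : ∀ t j, ∑ q, S j q * (d q * X t q) ≤ ∑ q, S (σ t) q * (d q * X t q))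
    (hover : ρ ∉ stabRegion S)
    (η : Fin Q → ℝ)
    (tc : ℕ → ℕ) (htc : StrictMono tc)
    (hηlim : Tendsto (fun c => fun q => X (tc c) q / (tc c : ℝ)) atTop (𝓝 η))
    (hηlimsup : ∑ q, η q * (d q * η q) =
      limsup (fun t : ℕ => ∑ q, (X t q / (t : ℝ)) * (d q * (X t q / (t : ℝ)))) atTop) :
    (¬ ∃ (ta : ℕ → ℕ) (ψ : Fin Q → ℝ), StrictMono ta ∧
      Tendsto (fun a => fun q => X (ta a) q / (ta a : ℝ)) atTop (𝓝 ψ) ∧ ψ ≠ η) ∧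
    Tendsto (fun t : ℕ => fun q => X t q / (t : ℝ)) atTop (𝓝 η) :=
  stmt8_general A Abar hA0 hAbar ρ hρ S hS σ d hd X hX0 hXrec hMW η tc htc hηlim hηlimsup
end

section
/- Let D be a diagonal Q×Q matrix with D_{qq} > 0 for every q, and let η ∈ ℝ_{≥0}^Q be a fixed point, i.e. η = (ρ − Σ_{m=1}^N α_m S_m)⁺ for some α_m ≥ 0 with Σ_{m=1}^N α_m = 1 such that ⟨S_m, D·η⟩ = max_{S∈𝒮} ⟨S, D·η⟩ for every m with α_m > 0. Then ⟨η, D·η⟩ = ⟨ρ, D·η⟩ − max_{S∈𝒮} ⟨S, D·η⟩. -/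
open Finset

/-!
On the support of `η = (ρ - ∑ αₘ Sₘ)⁺` the positive part is inactive, so
`⟨η, Dη⟩ = ⟨ρ - ∑ αₘ Sₘ, Dη⟩ = ⟨ρ, Dη⟩ - ∑ αₘ ⟨Sₘ, Dη⟩`. Every `Sₘ` charged by `α`
attains the maximum of `⟨S, Dη⟩`, so the convex combination `∑ αₘ ⟨Sₘ, Dη⟩` is that maximum.
-/

theorem max_zero_mul_mul_max_zero {R : Type*} [MulZeroClass R] [LinearOrder R] (x c : R) :
    max x 0 * (c * max x 0) = x * (c * max x 0) := by
  rcases le_total x 0 with h | h <;> simp [h]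

theorem sum_mul_eq_of_eq_of_pos {ι R : Type*} [Fintype ι] [Semiring R] [PartialOrder R]
    {α f : ι → R} {M : R} (hα0 : ∀ m, 0 ≤ α m) (hα1 : ∑ m, α m = 1)
    (hf : ∀ m, 0 < α m → f m = M) :
    ∑ m, α m * f m = M := by
  have hterm : ∀ m, α m * f m = α m * M := fun m => by
    rcases (hα0 m).lt_or_eq with h | h
    · rw [hf m h]
    · simp [← h]
  rw [sum_congr rfl fun m _ => hterm m, ← sum_mul, hα1, one_mul]

theorem sum_sub_sum_mul_mul {ι κ R : Type*} [Fintype ι] [Fintype κ] [CommRing R]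
    (ρ w : κ → R) (α : ι → R) (S : ι → κ → R) :
    ∑ q, (ρ q - ∑ m, α m * S m q) * w q = ∑ q, ρ q * w q - ∑ m, α m * ∑ q, S m q * w q := by
  simp only [sub_mul, sum_sub_distrib, sum_mul, mul_sum, mul_assoc]
  rw [sum_comm]

theorem stmt10_general {Q N : ℕ}
    (ρ : Fin Q → ℝ)
    (S : Fin N → Fin Q → ℝ)
    (d : Fin Q → ℝ)
    (η : Fin Q → ℝ)
    (α : Fin N → ℝ) (hα0 : ∀ m, 0 ≤ α m) (hα1 : (∑ m, α m) = 1)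
    (hfix : ∀ q, η q = max (ρ q - ∑ m, α m * S m q) 0)
    (hmax : ∀ m, 0 < α m →
      ∑ q, S m q * (d q * η q) = ⨆ j, ∑ q, S j q * (d q * η q)) :
    ∑ q, η q * (d q * η q) =
      ∑ q, ρ q * (d q * η q) - ⨆ j, ∑ q, S j q * (d q * η q) := by
  calc ∑ q, η q * (d q * η q)
      = ∑ q, (ρ q - ∑ m, α m * S m q) * (d q * η q) :=
        sum_congr rfl fun q _ => by rw [hfix q]; exact max_zero_mul_mul_max_zero _ _
    _ = ∑ q, ρ q * (d q * η q) - ∑ m, α m * ∑ q, S m q * (d q * η q) :=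
        sum_sub_sum_mul_mul _ _ _ _
    _ = ∑ q, ρ q * (d q * η q) - ⨆ j, ∑ q, S j q * (d q * η q) := by
        rw [sum_mul_eq_of_eq_of_pos hα0 hα1 hmax]

/-- for a fixed point η, ⟨η,Dη⟩ = ⟨ρ,Dη⟩ − max_{S∈𝒮} ⟨S,Dη⟩. -/
theorem stmt10 {Q N : ℕ} (hQ : 0 < Q) (hN : 0 < N)
    (ρ : Fin Q → ℝ) (hρpos : ∀ q, 0 < ρ q)
    (S : Fin N → Fin Q → ℝ) (hS : ∀ i q, 0 ≤ S i q)
    (d : Fin Q → ℝ) (hd : ∀ q, 0 < d q)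
    (η : Fin Q → ℝ) (hη : ∀ q, 0 ≤ η q)
    (α : Fin N → ℝ) (hα0 : ∀ m, 0 ≤ α m) (hα1 : (∑ m, α m) = 1)
    (hfix : ∀ q, η q = max (ρ q - ∑ m, α m * S m q) 0)
    (hmax : ∀ m, 0 < α m →
      ∑ q, S m q * (d q * η q) = ⨆ j, ∑ q, S j q * (d q * η q)) :
    ∑ q, η q * (d q * η q) =
      ∑ q, ρ q * (d q * η q) - ⨆ j, ∑ q, S j q * (d q * η q) :=
  stmt10_general ρ S d η α hα0 hα1 hfix hmax
end

section
/- Let ρ ∈ ℝ_{≥0}^Q and let 𝒫 ⊆ ℝ_{≥0}^Q be a convex set that is downward closed in the nonnegative orthant (if r ∈ 𝒫 and 0 ≤ r' ≤ r componentwise then r' ∈ 𝒫). Then the set Ψ := {(ρ − r)⁺ : r ∈ 𝒫} is a convex subset of ℝ^Q. -/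
/-!
Since `ρ - (ρ - r)⁺ = r ⊓ ρ`, downward closedness makes `Ψ` exactly `{x | 0 ≤ x ∧ ρ - x ∈ 𝒫}`:
the intersection of the positive cone with the preimage of `𝒫` under the affine map `x ↦ ρ - x`.
Both are convex.
-/

section LatticeOrderedGroup

variable {α : Type*} [Lattice α] [AddCommGroup α] [IsOrderedAddMonoid α]

theorem sub_posPart_sub (a b : α) : a - (a - b)⁺ = b ⊓ a := by
  rw [posPart_def, sub_sup, sub_sub_cancel, sub_zero]

theorem image_posPart_sub_eq {ρ : α} {P : Set α} (hρ : 0 ≤ ρ) (hP_nonneg : ∀ r ∈ P, 0 ≤ r)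
    (hP_down : ∀ r ∈ P, ∀ r', 0 ≤ r' → r' ≤ r → r' ∈ P) :
    (fun r => (ρ - r)⁺) '' P = {x | 0 ≤ x ∧ ρ - x ∈ P} := by
  ext x
  constructor
  · rintro ⟨r, hr, rfl⟩
    refine ⟨posPart_nonneg _, ?_⟩
    rw [sub_posPart_sub]
    exact hP_down r hr _ (le_inf (hP_nonneg r hr) hρ) inf_le_left
  · rintro ⟨hx, hρx⟩
    exact ⟨ρ - x, hρx, by simp only [sub_sub_cancel, posPart_eq_self.2 hx]⟩

end LatticeOrderedGroup

section Convexity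

variable {𝕜 E : Type*} [Ring 𝕜] [PartialOrder 𝕜] [AddCommGroup E] [Module 𝕜 E] {P : Set E}

theorem Convex.preimage_const_sub (hP : Convex 𝕜 P) (ρ : E) : Convex 𝕜 ((ρ - ·) ⁻¹' P) := by
  simp only [sub_eq_add_neg]
  exact (hP.translate_preimage_right ρ).neg

theorem Convex.image_posPart_sub [Lattice E] [IsOrderedAddMonoid E] [PosSMulMono 𝕜 E] {ρ : E}
    (hP : Convex 𝕜 P) (hρ : 0 ≤ ρ) (hP_nonneg : ∀ r ∈ P, 0 ≤ r)
    (hP_down : ∀ r ∈ P, ∀ r', 0 ≤ r' → r' ≤ r → r' ∈ P) :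
    Convex 𝕜 ((fun r => (ρ - r)⁺) '' P) := by
  rw [image_posPart_sub_eq hρ hP_nonneg hP_down]
  exact (convex_Ici 0).inter (hP.preimage_const_sub ρ)

end Convexity

/-- if 𝒫 is convex and downward closed in the nonnegative orthant, then
Ψ = {(ρ − r)⁺ : r ∈ 𝒫} is convex. -/
theorem stmt12 {Q : ℕ}
    (ρ : Fin Q → ℝ) (hρ : ∀ q, 0 ≤ ρ q)
    (P : Set (Fin Q → ℝ))
    (hPnn : ∀ r ∈ P, ∀ q, 0 ≤ r q)
    (hPconv : Convex ℝ P)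
    (hPdown : ∀ r ∈ P, ∀ r' : Fin Q → ℝ,
      (∀ q, 0 ≤ r' q) → (∀ q, r' q ≤ r q) → r' ∈ P) :
    Convex ℝ {x : Fin Q → ℝ | ∃ r ∈ P, x = fun q => max (ρ q - r q) 0} := by
  have hΨ : {x : Fin Q → ℝ | ∃ r ∈ P, x = fun q => max (ρ q - r q) 0} =
      (fun r => (ρ - r)⁺) '' P :=
    Set.ext fun _ => exists_congr fun _ => and_congr_right fun _ => eq_comm
  rw [hΨ]
  exact hPconv.image_posPart_sub hρ hPnn hPdown
end

section
/- Suppose ρ ∉ 𝒫. Let X be the workload process under the MaxWeight policy with weight matrix D, and let X̄ be the workload process under an arbitrary other scheduling policy (a sequence S̄(t) ∈ 𝒮 with the same arrivals A). Suppose both limits η := lim_{t→∞} X(t)/t and η̄ := lim_{t→∞} X̄(t)/t exist, Σ_k η_k > 0, Σ_k η̄_k > 0, and both achieve the same fairness criterion: η_q/(Σ_k η_k) = η̄_q/(Σ_k η̄_k) = θ_q for every q. Then η ≤ η̄ componentwise. -/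
/-!
Let `Y = X - X̄`. Both systems see the same arrivals, so `Y (s+1) - Y s` is the difference of the
two departure vectors and is bounded; since MaxWeight maximises `⟨S, D X⟩`, the drift
`⟨D (Y (s+1) - Y s), X s⟩` is bounded by a constant. Summing over `s < t`, summing by parts and
dividing by `t²` (with `X s ≈ s η` and `Y s ≈ s (η - η̄)`) gives `⟨D η, η - η̄⟩ ≤ 0`. Equal
fairness shares make `η̄ = r η` for a scalar `r`, so `(1 - r) ⟨D η, η⟩ ≤ 0` forces `r ≥ 1`, and
`η ≥ 0` gives `η ≤ r η = η̄`.
-/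

open Finset Filter Topology

lemma tendsto_sum_range_natCast_div_sq :
    Tendsto (fun t : ℕ => (∑ s ∈ range t, (s : ℝ)) / (t : ℝ) ^ 2) atTop (𝓝 (1 / 2)) := by
  have hgauss : ∀ t : ℕ, ∑ s ∈ range t, (s : ℝ) = t * (t - 1) / 2 := by
    intro t
    induction t with
    | zero => simp
    | succ n ih => rw [sum_range_succ, ih]; push_cast; ring
  have h : Tendsto (fun t : ℕ => (1 - (t : ℝ)⁻¹) / 2) atTop (𝓝 ((1 - 0) / 2)) :=
    (tendsto_const_nhds.sub tendsto_inv_atTop_nhds_zero_nat).div_const 2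
  rw [sub_zero] at h
  refine h.congr' ?_
  filter_upwards [eventually_ne_atTop 0] with t ht
  rw [hgauss]
  field_simp

lemma abs_sum_range_sub_natCast_mul_le {u : ℕ → ℝ} (hu0 : u 0 = 0) (L : ℝ) (t : ℕ) :
    |∑ s ∈ range t, (u s - s * L)| ≤ t * ∑ s ∈ range t, |u s / s - L| := by
  rw [mul_sum]
  refine (abs_sum_le_sum_abs _ _).trans (sum_le_sum fun s hs => ?_)
  rcases Nat.eq_zero_or_pos s with rfl | hs0
  · have : (0 : ℝ) ≤ t * |L| := by positivity
    simpa [hu0] using this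
  have hsR : (0 : ℝ) < s := Nat.cast_pos.2 hs0
  calc |u s - s * L| = s * |u s / s - L| := by
        rw [← abs_of_pos hsR, ← abs_mul, abs_of_pos hsR, mul_sub, mul_div_cancel₀ _ hsR.ne']
    _ ≤ t * |u s / s - L| := by
        gcongr
        exact_mod_cast (mem_range.1 hs).le

lemma tendsto_sum_range_div_sq_of_tendsto_div {u : ℕ → ℝ} {L : ℝ} (hu0 : u 0 = 0)
    (hu : Tendsto (fun t : ℕ => u t / t) atTop (𝓝 L)) :
    Tendsto (fun t : ℕ => (∑ s ∈ range t, u s) / (t : ℝ) ^ 2) atTop (𝓝 (L / 2)) := by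
  have herr : Tendsto (fun t : ℕ => (∑ s ∈ range t, (u s - s * L)) / (t : ℝ) ^ 2) atTop
      (𝓝 0) := by
    have hces := (hu.sub_const L).abs.cesaro
    rw [sub_self, abs_zero] at hces
    refine squeeze_zero_norm (fun t => ?_) hces
    rcases Nat.eq_zero_or_pos t with rfl | ht
    · simp
    have htR : (0 : ℝ) < t := Nat.cast_pos.2 ht
    rw [Real.norm_eq_abs, abs_div, abs_of_pos (pow_pos htR 2), div_le_iff₀ (pow_pos htR 2)]
    calc _ ≤ t * ∑ s ∈ range t, |u s / s - L| := abs_sum_range_sub_natCast_mul_le hu0 L t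
      _ = _ := by field_simp
  have h := herr.add (tendsto_sum_range_natCast_div_sq.const_mul L)
  rw [zero_add, mul_one_div] at h
  refine h.congr fun t => ?_
  rw [sum_sub_distrib, ← sum_mul]
  ring

lemma sum_range_natCast_mul_sub {y : ℕ → ℝ} (hy0 : y 0 = 0) (t : ℕ) :
    ∑ s ∈ range t, (s : ℝ) * (y (s + 1) - y s) = (t - 1) * y t - ∑ s ∈ range t, y s := by
  induction t with
  | zero => simp [hy0]
  | succ n ih => rw [sum_range_succ, ih, sum_range_succ]; push_cast; ring

lemma tendsto_sum_range_natCast_mul_sub_div_sq {y : ℕ → ℝ} {υ : ℝ} (hy0 : y 0 = 0)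
    (hy : Tendsto (fun t : ℕ => y t / t) atTop (𝓝 υ)) :
    Tendsto (fun t : ℕ => (∑ s ∈ range t, (s : ℝ) * (y (s + 1) - y s)) / (t : ℝ) ^ 2) atTop
      (𝓝 (υ / 2)) := by
  have hlast : Tendsto (fun t : ℕ => (t - 1) * y t / (t : ℝ) ^ 2) atTop (𝓝 υ) := by
    have h : Tendsto (fun t : ℕ => (1 - (t : ℝ)⁻¹) * (y t / t)) atTop (𝓝 ((1 - 0) * υ)) :=
      (tendsto_const_nhds.sub tendsto_inv_atTop_nhds_zero_nat).mul hy
    rw [sub_zero, one_mul] at h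
    refine h.congr' ?_
    filter_upwards [eventually_ne_atTop 0] with t ht
    field_simp
  have h := hlast.sub (tendsto_sum_range_div_sq_of_tendsto_div hy0 hy)
  rw [sub_half] at h
  refine h.congr fun t => ?_
  rw [sum_range_natCast_mul_sub hy0, sub_div]

lemma tendsto_sum_range_abs_sub_natCast_mul_div_sq {x : ℕ → ℝ} {ξ : ℝ} (hx0 : x 0 = 0)
    (hx : Tendsto (fun t : ℕ => x t / t) atTop (𝓝 ξ)) :
    Tendsto (fun t : ℕ => (∑ s ∈ range t, |x s - s * ξ|) / (t : ℝ) ^ 2) atTop (𝓝 0) := by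
  have h : Tendsto (fun t : ℕ => |x t - t * ξ| / t) atTop (𝓝 0) := by
    have h := (hx.sub_const ξ).abs
    rw [sub_self, abs_zero] at h
    refine h.congr' ?_
    filter_upwards [eventually_ne_atTop 0] with t ht
    have htR : (t : ℝ) ≠ 0 := Nat.cast_ne_zero.2 ht
    rw [show x t / t - ξ = (x t - t * ξ) / t by field_simp, abs_div, Nat.abs_cast]
  simpa using tendsto_sum_range_div_sq_of_tendsto_div (by simp [hx0]) h

-- split `x s = s ξ + (x s - s ξ)`: the main part is summed by parts, and the error is
-- `o(t²)` because the increments of `y` are bounded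
lemma tendsto_sum_range_sub_mul_div_sq {x y : ℕ → ℝ} {ξ υ M : ℝ} (hx0 : x 0 = 0)
    (hy0 : y 0 = 0) (hM : ∀ s, |y (s + 1) - y s| ≤ M)
    (hx : Tendsto (fun t : ℕ => x t / t) atTop (𝓝 ξ))
    (hy : Tendsto (fun t : ℕ => y t / t) atTop (𝓝 υ)) :
    Tendsto (fun t : ℕ => (∑ s ∈ range t, (y (s + 1) - y s) * x s) / (t : ℝ) ^ 2) atTop
      (𝓝 (ξ * υ / 2)) := by
  have herr : Tendsto (fun t : ℕ => (∑ s ∈ range t, (y (s + 1) - y s) * (x s - s * ξ)) /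
      (t : ℝ) ^ 2) atTop (𝓝 0) := by
    refine squeeze_zero_norm (fun t => ?_)
      (by simpa using (tendsto_sum_range_abs_sub_natCast_mul_div_sq hx0 hx).const_mul M)
    rw [Real.norm_eq_abs, abs_div, abs_of_nonneg (sq_nonneg (t : ℝ)), mul_div_assoc', mul_sum]
    gcongr
    refine (abs_sum_le_sum_abs _ _).trans (sum_le_sum fun s _ => ?_)
    rw [abs_mul]
    exact mul_le_mul_of_nonneg_right (hM s) (abs_nonneg _)
  have h := ((tendsto_sum_range_natCast_mul_sub_div_sq hy0 hy).const_mul ξ).add herr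
  rw [add_zero, ← mul_div_assoc] at h
  refine h.congr fun t => ?_
  rw [mul_div_assoc', ← add_div, mul_sum, ← sum_add_distrib]
  exact congrArg (· / _) (sum_congr rfl fun s _ => by ring)

lemma nonpos_of_le_mul_of_tendsto_div_sq {g : ℕ → ℝ} {C L : ℝ} (hg : ∀ t, g t ≤ C * t)
    (hL : Tendsto (fun t : ℕ => g t / (t : ℝ) ^ 2) atTop (𝓝 L)) : L ≤ 0 := by
  have hC : Tendsto (fun t : ℕ => C * (t : ℝ)⁻¹) atTop (𝓝 0) := by
    simpa using tendsto_inv_atTop_nhds_zero_nat.const_mul C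
  refine le_of_tendsto_of_tendsto hL hC ?_
  filter_upwards [eventually_gt_atTop 0] with t ht
  rw [div_le_iff₀ (by positivity)]
  calc g t ≤ C * t := hg t
    _ = C * (t : ℝ)⁻¹ * t ^ 2 := by field_simp

lemma mul_sub_min_le_sq {s x : ℝ} (hx : 0 ≤ x) : x * (s - min s x) ≤ s ^ 2 := by
  rcases le_total s x with h | h
  · rw [min_eq_left h, sub_self, mul_zero]
    positivity
  · rw [min_eq_right h]
    nlinarith

-- MaxWeight maximises `⟨s, D x⟩`, so the other schedule can outserve it only through the
-- capacity `s - min s x` that MaxWeight leaves unused, which costs at most `s²` per queue.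
lemma maxWeight_drift_le_s17 {ι : Type*} [Fintype ι] {d x y s sb : ι → ℝ} (hd : ∀ q, 0 ≤ d q)
    (hx : ∀ q, 0 ≤ x q) (hMW : ∑ q, sb q * (d q * x q) ≤ ∑ q, s q * (d q * x q)) :
    ∑ q, d q * ((min (sb q) (y q) - min (s q) (x q)) * x q) ≤ ∑ q, d q * s q ^ 2 := by
  have hterm : ∀ q, d q * ((min (sb q) (y q) - min (s q) (x q)) * x q)
      ≤ sb q * (d q * x q) - s q * (d q * x q) + d q * s q ^ 2 := fun q => by
    have h1 := mul_le_mul_of_nonneg_right (min_le_left (sb q) (y q)) (mul_nonneg (hd q) (hx q))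
    have h2 := mul_le_mul_of_nonneg_left (mul_sub_min_le_sq (s := s q) (hx q)) (hd q)
    linear_combination h1 + h2
  calc _ ≤ ∑ q, (sb q * (d q * x q) - s q * (d q * x q) + d q * s q ^ 2) :=
        sum_le_sum fun q _ => hterm q
    _ = ∑ q, sb q * (d q * x q) - ∑ q, s q * (d q * x q) + ∑ q, d q * s q ^ 2 := by
        rw [sum_add_distrib, sum_sub_distrib]
    _ ≤ _ := by linarith

def IsWorkload {ι κ : Type*} (A : ℕ → ι → ℝ) (S : κ → ι → ℝ) (σ : ℕ → κ)
    (X : ℕ → ι → ℝ) : Prop :=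
  (∀ q, X 0 q = 0) ∧ ∀ t q, X (t + 1) q = X t q + A t q - min (S (σ t) q) (X t q)

namespace IsWorkload

variable {ι κ : Type*} {A : ℕ → ι → ℝ} {S : κ → ι → ℝ} {σ σb : ℕ → κ} {X Xb : ℕ → ι → ℝ}

lemma nonneg (hX : IsWorkload A S σ X) (hA0 : ∀ t q, 0 ≤ A t q) : ∀ t q, 0 ≤ X t q
  | 0, q => (hX.1 q).ge
  | t + 1, q => by rw [hX.2]; linarith [min_le_right (S (σ t) q) (X t q), hA0 t q]

lemma sub_increment (hX : IsWorkload A S σ X) (hXb : IsWorkload A S σb Xb) (s : ℕ) (q : ι) :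
    (X (s + 1) q - Xb (s + 1) q) - (X s q - Xb s q)
      = min (S (σb s) q) (Xb s q) - min (S (σ s) q) (X s q) := by
  rw [hX.2, hXb.2]
  ring

lemma sum_drift_le [Fintype ι] [Fintype κ] {d : ι → ℝ} (hX : IsWorkload A S σ X)
    (hXb : IsWorkload A S σb Xb) (hA0 : ∀ t q, 0 ≤ A t q) (hd : ∀ q, 0 ≤ d q)
    (hMW : ∀ t j, ∑ q, S j q * (d q * X t q) ≤ ∑ q, S (σ t) q * (d q * X t q)) (t : ℕ) :
    ∑ q, d q * ∑ s ∈ range t, ((X (s + 1) q - Xb (s + 1) q) - (X s q - Xb s q)) * X s q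
      ≤ (∑ i, ∑ q, d q * S i q ^ 2) * t := by
  have hslot : ∀ s, ∑ q, d q * (((X (s + 1) q - Xb (s + 1) q) - (X s q - Xb s q)) * X s q)
      ≤ ∑ i, ∑ q, d q * S i q ^ 2 := fun s => by
    simp only [hX.sub_increment hXb]
    refine (maxWeight_drift_le_s17 hd (hX.nonneg hA0 s) (hMW s (σb s))).trans ?_
    exact single_le_sum (f := fun i => ∑ q, d q * S i q ^ 2)
      (fun i _ => sum_nonneg fun q _ => mul_nonneg (hd q) (sq_nonneg _)) (mem_univ _)
  simp only [mul_sum]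
  rw [sum_comm]
  calc _ ≤ ∑ _s ∈ range t, ∑ i, ∑ q, d q * S i q ^ 2 := sum_le_sum fun s _ => hslot s
    _ = _ := by rw [sum_const, card_range, nsmul_eq_mul, mul_comm]

lemma tendsto_sum_sub_increment_mul_div_sq [Fintype κ] (hX : IsWorkload A S σ X)
    (hXb : IsWorkload A S σb Xb) (hA0 : ∀ t q, 0 ≤ A t q) (hS : ∀ i q, 0 ≤ S i q) (q : ι)
    {ξ ξb : ℝ} (hξ : Tendsto (fun t : ℕ => X t q / t) atTop (𝓝 ξ))
    (hξb : Tendsto (fun t : ℕ => Xb t q / t) atTop (𝓝 ξb)) :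
    Tendsto (fun t : ℕ => (∑ s ∈ range t,
      ((X (s + 1) q - Xb (s + 1) q) - (X s q - Xb s q)) * X s q) / (t : ℝ) ^ 2) atTop
      (𝓝 (ξ * (ξ - ξb) / 2)) := by
  have hdep : ∀ i {x : ℝ}, 0 ≤ x → 0 ≤ min (S i q) x ∧ min (S i q) x ≤ ∑ j, S j q :=
    fun i x hx => ⟨le_min (hS i q) hx,
      (min_le_left _ _).trans (single_le_sum (fun j _ => hS j q) (mem_univ i))⟩
  refine tendsto_sum_range_sub_mul_div_sq (x := fun t => X t q)
    (y := fun t => X t q - Xb t q) (M := ∑ j, S j q) (hX.1 q) (by simp [hX.1, hXb.1])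
    (fun s => ?_) hξ (by simpa only [sub_div] using hξ.sub hξb)
  obtain ⟨hb0, hbM⟩ := hdep (σb s) (hXb.nonneg hA0 s q)
  obtain ⟨h0, hM⟩ := hdep (σ s) (hX.nonneg hA0 s q)
  rw [hX.sub_increment hXb]
  exact abs_sub_le_of_nonneg_of_le hb0 hbM h0 hM

theorem maxWeight_sum_mul_mul_sub_nonpos [Fintype ι] [Fintype κ] {d η ηb : ι → ℝ}
    (hX : IsWorkload A S σ X) (hXb : IsWorkload A S σb Xb) (hA0 : ∀ t q, 0 ≤ A t q)
    (hS : ∀ i q, 0 ≤ S i q) (hd : ∀ q, 0 ≤ d q)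
    (hMW : ∀ t j, ∑ q, S j q * (d q * X t q) ≤ ∑ q, S (σ t) q * (d q * X t q))
    (hη : ∀ q, Tendsto (fun t : ℕ => X t q / t) atTop (𝓝 (η q)))
    (hηb : ∀ q, Tendsto (fun t : ℕ => Xb t q / t) atTop (𝓝 (ηb q))) :
    ∑ q, d q * (η q * (η q - ηb q)) ≤ 0 := by
  have hlim := tendsto_finsetSum univ fun q _ =>
    (hX.tendsto_sum_sub_increment_mul_div_sq hXb hA0 hS q (hη q) (hηb q)).const_mul (d q)
  have h := nonpos_of_le_mul_of_tendsto_div_sq (hX.sum_drift_le hXb hA0 hd hMW)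
    (hlim.congr fun t => by rw [sum_div]; simp only [mul_div_assoc])
  simp only [← mul_div_assoc, ← sum_div] at h
  linarith

end IsWorkload

lemma one_le_of_sum_mul_sub_mul_nonpos {ι : Type*} [Fintype ι] {d η : ι → ℝ} {r : ℝ}
    (hd : ∀ q, 0 < d q) (hη : η ≠ 0) (h : ∑ q, d q * (η q * (η q - r * η q)) ≤ 0) : 1 ≤ r := by
  obtain ⟨q, hq⟩ := Function.ne_iff.1 hη
  have hpos : 0 < ∑ q, d q * η q ^ 2 :=
    sum_pos' (fun q _ => mul_nonneg (hd q).le (sq_nonneg _))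
      ⟨q, mem_univ q, mul_pos (hd q) (pow_two_pos_of_ne_zero hq)⟩
  have h' : (1 - r) * ∑ q, d q * η q ^ 2 ≤ 0 := by
    rw [mul_sum]
    exact (sum_congr rfl fun q _ => by ring).trans_le h
  linarith [nonpos_of_mul_nonpos_left h' hpos]

lemma le_of_div_sum_eq_div_sum {ι : Type*} [Fintype ι] {d η ηb : ι → ℝ} (hd : ∀ q, 0 < d q)
    (hη : ∀ q, 0 ≤ η q) (hsum : 0 < ∑ k, η k) (hsumb : 0 < ∑ k, ηb k)
    (hfair : ∀ q, η q / ∑ k, η k = ηb q / ∑ k, ηb k)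
    (h : ∑ q, d q * (η q * (η q - ηb q)) ≤ 0) (q : ι) : η q ≤ ηb q := by
  have hprop : ∀ q, ηb q = (∑ k, ηb k) / (∑ k, η k) * η q := fun q => by
    have h := hfair q
    rw [div_eq_div_iff hsum.ne' hsumb.ne'] at h
    field_simp
    linarith
  have hr : 1 ≤ (∑ k, ηb k) / (∑ k, η k) :=
    one_le_of_sum_mul_sub_mul_nonpos (η := η) hd (fun h => by simp [h] at hsum)
      (by simpa only [← hprop] using h)
  rw [hprop q]
  exact le_mul_of_one_le_left (hη q) hr

theorem stmt17_general {Q N : ℕ}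
    (A : ℕ → Fin Q → ℝ)
    (hA0 : ∀ t q, 0 ≤ A t q)
    (S : Fin N → Fin Q → ℝ) (hS : ∀ i q, 0 ≤ S i q)
    (d : Fin Q → ℝ) (hd : ∀ q, 0 < d q)
    -- MaxWeight trajectory X with policy σ
    (σ : ℕ → Fin N)
    (X : ℕ → Fin Q → ℝ) (hX0 : ∀ q, X 0 q = 0)
    (hXrec : ∀ t q, X (t + 1) q = X t q + A t q - min (S (σ t) q) (X t q))
    (hMW : ∀ t j, ∑ q, S j q * (d q * X t q) ≤ ∑ q, S (σ t) q * (d q * X t q))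
    -- alternative trajectory X̄ with arbitrary policy σ̄, same arrivals
    (σb : ℕ → Fin N)
    (Xb : ℕ → Fin Q → ℝ) (hXb0 : ∀ q, Xb 0 q = 0)
    (hXbrec : ∀ t q, Xb (t + 1) q = Xb t q + A t q - min (S (σb t) q) (Xb t q))
    (η ηb : Fin Q → ℝ)
    (hηlim : Tendsto (fun t : ℕ => fun q => X t q / (t : ℝ)) atTop (𝓝 η))
    (hηblim : Tendsto (fun t : ℕ => fun q => Xb t q / (t : ℝ)) atTop (𝓝 ηb))
    (hsum : 0 < ∑ k, η k) (hsumb : 0 < ∑ k, ηb k)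
    (θ : Fin Q → ℝ)
    (hfair : ∀ q, η q / (∑ k, η k) = θ q)
    (hfairb : ∀ q, ηb q / (∑ k, ηb k) = θ q) :
    ∀ q, η q ≤ ηb q := by
  have hX : IsWorkload A S σ X := ⟨hX0, hXrec⟩
  have hXb : IsWorkload A S σb Xb := ⟨hXb0, hXbrec⟩
  have hlim := tendsto_pi_nhds.1 hηlim
  have hneg := hX.maxWeight_sum_mul_mul_sub_nonpos hXb hA0 hS (fun q => (hd q).le) hMW hlim
    (tendsto_pi_nhds.1 hηblim)
  have hη : ∀ q, 0 ≤ η q := fun q =>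
    ge_of_tendsto' (hlim q) fun t => div_nonneg (hX.nonneg hA0 t q) t.cast_nonneg
  exact le_of_div_sum_eq_div_sum hd hη hsum hsumb (fun q => (hfair q).trans (hfairb q).symm) hneg

/-- among all policies achieving the fairness criterion θ, MaxWeight achieves
the componentwise minimal growth vector: η ≤ η̄. -/
theorem stmt17 {Q N : ℕ} (hQ : 0 < Q) (hN : 0 < N)
    (A : ℕ → Fin Q → ℝ) (Abar : Fin Q → ℝ)
    (hA0 : ∀ t q, 0 ≤ A t q) (hAbar : ∀ t q, A t q ≤ Abar q)
    (ρ : Fin Q → ℝ) (hρpos : ∀ q, 0 < ρ q)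
    (hρ : ∀ q, Tendsto (fun t : ℕ => (∑ s ∈ Finset.range t, A s q) / (t : ℝ))
      atTop (𝓝 (ρ q)))
    (S : Fin N → Fin Q → ℝ) (hS : ∀ i q, 0 ≤ S i q)
    (hover : ρ ∉ stabRegion S)
    (d : Fin Q → ℝ) (hd : ∀ q, 0 < d q)
    -- MaxWeight trajectory X with policy σ
    (σ : ℕ → Fin N)
    (X : ℕ → Fin Q → ℝ) (hX0 : ∀ q, X 0 q = 0)
    (hXrec : ∀ t q, X (t + 1) q = X t q + A t q - min (S (σ t) q) (X t q))
    (hMW : ∀ t j, ∑ q, S j q * (d q * X t q) ≤ ∑ q, S (σ t) q * (d q * X t q))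
    -- alternative trajectory X̄ with arbitrary policy σ̄, same arrivals
    (σb : ℕ → Fin N)
    (Xb : ℕ → Fin Q → ℝ) (hXb0 : ∀ q, Xb 0 q = 0)
    (hXbrec : ∀ t q, Xb (t + 1) q = Xb t q + A t q - min (S (σb t) q) (Xb t q))
    (η ηb : Fin Q → ℝ)
    (hηlim : Tendsto (fun t : ℕ => fun q => X t q / (t : ℝ)) atTop (𝓝 η))
    (hηblim : Tendsto (fun t : ℕ => fun q => Xb t q / (t : ℝ)) atTop (𝓝 ηb))
    (hsum : 0 < ∑ k, η k) (hsumb : 0 < ∑ k, ηb k)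
    (θ : Fin Q → ℝ)
    (hfair : ∀ q, η q / (∑ k, η k) = θ q)
    (hfairb : ∀ q, ηb q / (∑ k, ηb k) = θ q) :
    ∀ q, η q ≤ ηb q :=
  stmt17_general A hA0 S hS d hd σ X hX0 hXrec hMW σb Xb hXb0 hXbrec η ηb hηlim hηblim hsum hsumb θ
    hfair hfairb
end
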